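/- arXiv:2505.16837 — 7 statements merged into one kernel-verified Lean document; each statement's English description precedes it below -/
import Mathlib

section
/- For every n ≥ 2, the three linear orders x_1 x_2 z_1 (x_3 z_2)(x_4 z_3)···(x_n z_{n-1}) z_n, and x_2 (x_3 z_2)(x_4 z_3)···(x_n z_{n-1}) x_1 z_n z_1, and x_1 (x_n z_n)(x_{n-1} z_{n-1})···(x_2 z_2) z_1 form a realizer of the crown poset C_n. Consequently the crown C_n has order dimension at most 3. -/
section Defs

variable {α : Type*}

/-- `r` is a linear extension of the partial order on `α`. -/
def IsLinExt [PartialOrder α] (r : α → α → Prop) : Prop :=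
  IsLinearOrder α r ∧ ∀ a b : α, a ≤ b → r a b

/-- A family of linear orders is a realizer of the partial order on `α`. -/
def IsRealizer [PartialOrder α] {ι : Type*} (L : ι → α → α → Prop) : Prop :=
  (∀ i, IsLinExt (L i)) ∧ ∀ a b : α, a ≤ b ↔ ∀ i, L i a b

/-- The order dimension: minimal size of a realizer. -/
noncomputable def orderDim (α : Type*) [PartialOrder α] : ℕ :=
  sInf {k | ∃ L : Fin k → α → α → Prop, IsRealizer L}

/-- The cover graph (undirected Hasse diagram) of a poset. -/
def coverGraph (α : Type*) [PartialOrder α] : SimpleGraph α where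
  Adj a b := a ⋖ b ∨ b ⋖ a
  symm := ⟨fun a b h => h.elim Or.inr Or.inl⟩
  loopless := ⟨fun a h =>
    h.elim (fun h' => absurd h'.lt (lt_irrefl a)) (fun h' => absurd h'.lt (lt_irrefl a))⟩

/-- The linear order determined by a duplicate-free full list: `a ≤ b` iff `a`
occurs no later than `b`. -/
def listLE [DecidableEq α] (l : List α) (a b : α) : Prop :=
  l.idxOf a ≤ l.idxOf b

/-- The lists in `ls` are words (each listing all elements of `α` exactly once)
whose associated linear orders are linear extensions of `α` forming a realizer. -/
def IsListRealizer [PartialOrder α] [DecidableEq α] (ls : List (List α)) : Prop :=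
  (∀ l ∈ ls, l.Nodup ∧ ∀ a : α, a ∈ l) ∧
  (∀ l ∈ ls, ∀ a b : α, a ≤ b → listLE l a b) ∧
  (∀ a b : α, (∀ l ∈ ls, listLE l a b) → a ≤ b)

/-- A graph is a cycle: connected and 2-regular. -/
def IsCycleGraph {V : Type*} (G : SimpleGraph V) : Prop :=
  G.Connected ∧ ∀ v : V, (G.neighborSet v).ncard = 2

/-- `Ua a`: elements `x ≠ a` such that the path from `a` to `x` in the cover
graph starts with an upward cover. -/
def Ua [PartialOrder α] (a : α) : Set α :=
  {x | x ≠ a ∧ ∃ p : (coverGraph α).Walk a x, p.IsPath ∧ a ⋖ p.getVert 1}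

/-- `Da a`: elements `x ≠ a` such that the path from `a` to `x` in the cover
graph starts with a downward cover. -/
def Da [PartialOrder α] (a : α) : Set α :=
  {x | x ≠ a ∧ ∃ p : (coverGraph α).Walk a x, p.IsPath ∧ p.getVert 1 ⋖ a}

/-- The grafting order on the disjoint union of rooted posets `(T x, r x)` indexed
by a poset `β`. -/
def graftLE {β : Type*} [PartialOrder β] {T : β → Type*} [∀ x, PartialOrder (T x)]
    (r : ∀ x, T x) (p q : Σ x, T x) : Prop :=
  (∃ h : p.1 = q.1, (h ▸ p.2 : T q.1) ≤ q.2) ∨ (p.1 < q.1 ∧ p.2 ≤ r p.1 ∧ r q.1 ≤ q.2)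

end Defs

/-!
Each of the three words has length `2n` and contains every element of the crown, so it lists each
element exactly once and defines a linear order. The position of every `x_i` and `z_i` in each
word is an explicit function of `i` and `n`; in these coordinates, being a linear extension means
`x_i` and `x_{i+1}` precede `z_i` in every word, and being a realizer means that every other pair
(`x_i, x_j` or `z_i, z_j` with `i ≠ j`, a non-adjacent `x_j, z_i`, and every `z_i, x_j`) appears in
reversed order in at least one word. Both reduce to linear arithmetic on the positions.
-/

theorem List.nodup_of_forall_mem_of_length_eq_card {α : Type*} [Fintype α] [DecidableEq α]
    {l : List α} (hmem : ∀ a, a ∈ l) (hlen : l.length = Fintype.card α) : l.Nodup := by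
  have huniv : l.toFinset = Finset.univ := Finset.eq_univ_of_forall (by simpa using hmem)
  rw [← Multiset.coe_nodup, ← Multiset.toFinset_card_eq_card_iff_nodup]
  exact (congrArg Finset.card huniv).trans hlen.symm

theorem List.Nodup.idxOf_eq_of_getElem?_eq {α : Type*} [DecidableEq α] {l : List α}
    (hl : l.Nodup) {k : ℕ} {a : α} (h : l[k]? = some a) : l.idxOf a = k := by
  obtain ⟨hk, rfl⟩ := List.getElem?_eq_some_iff.1 h
  exact hl.idxOf_getElem k hk

section

variable {α : Type*} (f g : ℕ → α)

theorem List.length_flatMap_range_pair (m : ℕ) :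
    ((List.range m).flatMap fun i => [f i, g i]).length = 2 * m := by
  induction m with
  | zero => rfl
  | succ m ih => simp [List.range_succ, ih]; ring

theorem List.getElem?_flatMap_range_pair {m k : ℕ} (hk : k < m) :
    ((List.range m).flatMap fun i => [f i, g i])[2 * k]? = some (f k) ∧
      ((List.range m).flatMap fun i => [f i, g i])[2 * k + 1]? = some (g k) := by
  induction m with
  | zero => omega
  | succ m ih =>
    have hlen := List.length_flatMap_range_pair f g m
    rw [List.range_succ, List.flatMap_append]
    rcases Nat.lt_or_ge k m with h | h
    · rw [List.getElem?_append_left (by omega), List.getElem?_append_left (by omega)]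
      exact ih h
    · obtain rfl : k = m := by omega
      rw [List.getElem?_append_right (by omega), List.getElem?_append_right (by omega), hlen]
      simp

end

theorem orderDim_le_length_of_isListRealizer {α : Type*} [PartialOrder α] [DecidableEq α]
    {ls : List (List α)} (h : IsListRealizer ls) : orderDim α ≤ ls.length := by
  obtain ⟨hwords, hext, hrev⟩ := h
  refine Nat.sInf_le ⟨fun i => listLE ls[i], fun i => ⟨?_, hext _ (ls.getElem_mem i.2)⟩,
    fun a b => ⟨fun hab i => hext _ (ls.getElem_mem i.2) a b hab, fun hall => ?_⟩⟩
  · have hmem := (hwords _ (ls.getElem_mem i.2)).2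
    exact
      { refl := fun a => le_refl _
        trans := fun a b c => le_trans
        antisymm := fun a b hab hba => (List.idxOf_inj (hmem a)).1 (le_antisymm hab hba)
        total := fun a b => le_total _ _ }
  · refine hrev a b fun l hl => ?_
    obtain ⟨i, hi, rfl⟩ := List.getElem_of_mem hl
    exact hall ⟨i, hi⟩

/-- `X i` and `Z i` are `x_{i+1}` and `z_{i+1}`; `X n = X 0` turns the relation `X (i + 1) < Z i`
at `i = n - 1` into `x_1 < z_n`. -/
structure IsCrown {α : Type*} [PartialOrder α] [Fintype α] (n : ℕ) (X Z : ℕ → α) : Prop where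
  card_eq : Fintype.card α = 2 * n
  exists_eq : ∀ a, ∃ i < n, a = X i ∨ a = Z i
  lt_iff : ∀ a b, a < b ↔ ∃ i < n, (a = X i ∧ b = Z i) ∨ (a = X (i + 1) ∧ b = Z i)
  X_n : X n = X 0

namespace IsCrown

variable {α : Type*} [PartialOrder α] [Fintype α] {n : ℕ} {X Z : ℕ → α}
  {l : List α} {pX pZ : ℕ → ℕ}

theorem mem_of_getElem? (h : IsCrown n X Z)
    (hpos : ∀ i < n, l[pX i]? = some (X i) ∧ l[pZ i]? = some (Z i)) (a : α) : a ∈ l := by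
  obtain ⟨i, hi, rfl | rfl⟩ := h.exists_eq a
  exacts [List.mem_of_getElem? (hpos i hi).1, List.mem_of_getElem? (hpos i hi).2]

variable [DecidableEq α]

theorem nodup_of_getElem? (h : IsCrown n X Z) (hlen : l.length = 2 * n)
    (hpos : ∀ i < n, l[pX i]? = some (X i) ∧ l[pZ i]? = some (Z i)) : l.Nodup :=
  List.nodup_of_forall_mem_of_length_eq_card (h.mem_of_getElem? hpos) (hlen.trans h.card_eq.symm)

theorem idxOf_of_getElem? (h : IsCrown n X Z) (hlen : l.length = 2 * n)
    (hpos : ∀ i < n, l[pX i]? = some (X i) ∧ l[pZ i]? = some (Z i)) {i : ℕ} (hi : i < n) :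
    l.idxOf (X i) = pX i ∧ l.idxOf (Z i) = pZ i :=
  have hl := h.nodup_of_getElem? hlen hpos
  ⟨hl.idxOf_eq_of_getElem?_eq (hpos i hi).1, hl.idxOf_eq_of_getElem?_eq (hpos i hi).2⟩

theorem listLE_of_le_of_getElem? (h : IsCrown n X Z) (hlen : l.length = 2 * n)
    (hpos : ∀ i < n, l[pX i]? = some (X i) ∧ l[pZ i]? = some (Z i))
    (hXZ : ∀ i < n, pX i ≤ pZ i) (hXZ_succ : ∀ i, i + 1 < n → pX (i + 1) ≤ pZ i)
    (hXZ_last : pX 0 ≤ pZ (n - 1)) {a b : α} (hab : a ≤ b) : listLE l a b := by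
  have hidx := fun {i} (hi : i < n) => h.idxOf_of_getElem? hlen hpos hi
  obtain hab | rfl := hab.lt_or_eq
  · obtain ⟨i, hi, ⟨rfl, rfl⟩ | ⟨rfl, rfl⟩⟩ := (h.lt_iff a b).1 hab
    · rw [listLE, (hidx hi).1, (hidx hi).2]
      exact hXZ i hi
    · obtain hi' | hi' := Nat.lt_or_ge (i + 1) n
      · rw [listLE, (hidx hi').1, (hidx hi).2]
        exact hXZ_succ i hi'
      · obtain rfl : i = n - 1 := by omega
        rw [listLE, Nat.sub_add_cancel (by omega), h.X_n, (hidx (by omega)).1, (hidx hi).2]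
        exact hXZ_last
  · exact le_refl _

end IsCrown

namespace Crown

variable {α : Type*}

def word₁ (n : ℕ) (X Z : ℕ → α) : List α :=
  [X 0, X 1, Z 0] ++ ((List.range (n - 2)).flatMap fun i => [X (i + 2), Z (i + 1)]) ++ [Z (n - 1)]

def word₂ (n : ℕ) (X Z : ℕ → α) : List α :=
  [X 1] ++ ((List.range (n - 2)).flatMap fun i => [X (i + 2), Z (i + 1)]) ++ [X 0, Z (n - 1), Z 0]

def word₃ (n : ℕ) (X Z : ℕ → α) : List α :=
  [X 0] ++ ((List.range (n - 1)).flatMap fun i => [X (n - 1 - i), Z (n - 1 - i)]) ++ [Z 0]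

def posX₁ (i : ℕ) : ℕ := if i = 0 then 0 else 2 * i - 1

def posZ₁ (n i : ℕ) : ℕ := if i = n - 1 then 2 * n - 1 else 2 * i + 2

def posX₂ (n i : ℕ) : ℕ := if i = 0 then 2 * n - 3 else if i = 1 then 0 else 2 * i - 3

def posZ₂ (n i : ℕ) : ℕ := if i = 0 then 2 * n - 1 else if i = n - 1 then 2 * n - 2 else 2 * i

def posX₃ (n i : ℕ) : ℕ := if i = 0 then 0 else 2 * n - 1 - 2 * i

def posZ₃ (n i : ℕ) : ℕ := if i = 0 then 2 * n - 1 else 2 * n - 2 * i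

variable {n : ℕ} (X Z : ℕ → α)

theorem length_word₁ (hn : 2 ≤ n) : (word₁ n X Z).length = 2 * n := by
  simp [word₁]; omega

theorem length_word₂ (hn : 2 ≤ n) : (word₂ n X Z).length = 2 * n := by
  simp [word₂]; omega

theorem length_word₃ (hn : 2 ≤ n) : (word₃ n X Z).length = 2 * n := by
  simp [word₃]; omega

theorem getElem?_word₁ (hn : 2 ≤ n) {i : ℕ} (hi : i < n) :
    (word₁ n X Z)[posX₁ i]? = some (X i) ∧ (word₁ n X Z)[posZ₁ n i]? = some (Z i) := by
  have hlen := List.length_flatMap_range_pair (fun i => X (i + 2)) (fun i => Z (i + 1)) (n - 2)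
  have hpairs := fun k => List.getElem?_flatMap_range_pair
    (fun i => X (i + 2)) (fun i => Z (i + 1)) (m := n - 2) (k := k)
  unfold word₁ posX₁ posZ₁
  constructor
  · rcases i with _ | _ | k
    · rfl
    · rfl
    · grind
  · rcases i with _ | k <;> grind

theorem getElem?_word₂ (hn : 2 ≤ n) {i : ℕ} (hi : i < n) :
    (word₂ n X Z)[posX₂ n i]? = some (X i) ∧ (word₂ n X Z)[posZ₂ n i]? = some (Z i) := by
  have hlen := List.length_flatMap_range_pair (fun i => X (i + 2)) (fun i => Z (i + 1)) (n - 2)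
  have hpairs := fun k => List.getElem?_flatMap_range_pair
    (fun i => X (i + 2)) (fun i => Z (i + 1)) (m := n - 2) (k := k)
  unfold word₂ posX₂ posZ₂
  constructor
  · rcases i with _ | _ | k
    · grind
    · rfl
    · grind
  · rcases i with _ | k <;> grind

theorem getElem?_word₃ (hn : 2 ≤ n) {i : ℕ} (hi : i < n) :
    (word₃ n X Z)[posX₃ n i]? = some (X i) ∧ (word₃ n X Z)[posZ₃ n i]? = some (Z i) := by
  have hlen := List.length_flatMap_range_pair
    (fun i => X (n - 1 - i)) (fun i => Z (n - 1 - i)) (n - 1)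
  unfold word₃ posX₃ posZ₃
  rcases i with _ | k
  · grind
  · have hpair := List.getElem?_flatMap_range_pair
      (fun i => X (n - 1 - i)) (fun i => Z (n - 1 - i)) (m := n - 1) (k := n - 2 - k) (by omega)
    simp only [show n - 1 - (n - 2 - k) = k + 1 by omega] at hpair
    rw [show 2 * n - 1 - 2 * (k + 1) = 1 + 2 * (n - 2 - k) by omega,
      show 2 * n - 2 * (k + 1) = 1 + (2 * (n - 2 - k) + 1) by omega]
    grind

end Crown

namespace IsCrown

open Crown

variable {α : Type*} [PartialOrder α] [Fintype α] [DecidableEq α] {n : ℕ} {X Z : ℕ → α}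

theorem idxOf_word₁ (h : IsCrown n X Z) (hn : 2 ≤ n) {i : ℕ} (hi : i < n) :
    (word₁ n X Z).idxOf (X i) = posX₁ i ∧ (word₁ n X Z).idxOf (Z i) = posZ₁ n i :=
  h.idxOf_of_getElem? (length_word₁ X Z hn) (fun _ => getElem?_word₁ X Z hn) hi

theorem idxOf_word₂ (h : IsCrown n X Z) (hn : 2 ≤ n) {i : ℕ} (hi : i < n) :
    (word₂ n X Z).idxOf (X i) = posX₂ n i ∧ (word₂ n X Z).idxOf (Z i) = posZ₂ n i :=
  h.idxOf_of_getElem? (length_word₂ X Z hn) (fun _ => getElem?_word₂ X Z hn) hi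

theorem idxOf_word₃ (h : IsCrown n X Z) (hn : 2 ≤ n) {i : ℕ} (hi : i < n) :
    (word₃ n X Z).idxOf (X i) = posX₃ n i ∧ (word₃ n X Z).idxOf (Z i) = posZ₃ n i :=
  h.idxOf_of_getElem? (length_word₃ X Z hn) (fun _ => getElem?_word₃ X Z hn) hi

theorem le_of_listLE_words (h : IsCrown n X Z) (hn : 2 ≤ n) {a b : α}
    (h₁ : listLE (word₁ n X Z) a b) (h₂ : listLE (word₂ n X Z) a b)
    (h₃ : listLE (word₃ n X Z) a b) : a ≤ b := by
  obtain ⟨i, hi, rfl | rfl⟩ := h.exists_eq a <;> obtain ⟨j, hj, rfl | rfl⟩ := h.exists_eq b <;>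
    simp only [listLE, h.idxOf_word₁ hn, h.idxOf_word₂ hn, h.idxOf_word₃ hn, hi, hj,
      posX₁, posZ₁, posX₂, posZ₂, posX₃, posZ₃] at h₁ h₂ h₃
  · obtain rfl : i = j := by split_ifs at h₁ h₂ h₃ <;> omega
    exact le_rfl
  · have hadj : i = j ∨ i = j + 1 ∨ (i = 0 ∧ j = n - 1) := by split_ifs at h₁ h₂ h₃ <;> omega
    refine ((h.lt_iff _ _).2 ?_).le
    obtain rfl | rfl | ⟨rfl, rfl⟩ := hadj
    · exact ⟨i, hi, .inl ⟨rfl, rfl⟩⟩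
    · exact ⟨j, hj, .inr ⟨rfl, rfl⟩⟩
    · exact ⟨n - 1, hj, .inr ⟨by rw [Nat.sub_add_cancel (by omega), h.X_n], rfl⟩⟩
  · exfalso
    split_ifs at h₁ h₂ h₃ <;> omega
  · obtain rfl : i = j := by split_ifs at h₁ h₂ h₃ <;> omega
    exact le_rfl

theorem isListRealizer_words (h : IsCrown n X Z) (hn : 2 ≤ n) :
    IsListRealizer [word₁ n X Z, word₂ n X Z, word₃ n X Z] := by
  refine ⟨?_, ?_, fun a b hall => h.le_of_listLE_words hn (hall _ (by simp)) (hall _ (by simp))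
    (hall _ (by simp))⟩
  · simp only [List.mem_cons, List.not_mem_nil, or_false]
    rintro l (rfl | rfl | rfl)
    · exact ⟨h.nodup_of_getElem? (length_word₁ X Z hn) (fun _ => getElem?_word₁ X Z hn),
        h.mem_of_getElem? (fun _ => getElem?_word₁ X Z hn)⟩
    · exact ⟨h.nodup_of_getElem? (length_word₂ X Z hn) (fun _ => getElem?_word₂ X Z hn),
        h.mem_of_getElem? (fun _ => getElem?_word₂ X Z hn)⟩
    · exact ⟨h.nodup_of_getElem? (length_word₃ X Z hn) (fun _ => getElem?_word₃ X Z hn),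
        h.mem_of_getElem? (fun _ => getElem?_word₃ X Z hn)⟩
  · simp only [List.mem_cons, List.not_mem_nil, or_false]
    rintro l (rfl | rfl | rfl) a b
    · refine h.listLE_of_le_of_getElem? (length_word₁ X Z hn) (fun _ => getElem?_word₁ X Z hn)
        ?_ ?_ ?_ <;> intros <;> grind [posX₁, posZ₁]
    · refine h.listLE_of_le_of_getElem? (length_word₂ X Z hn) (fun _ => getElem?_word₂ X Z hn)
        ?_ ?_ ?_ <;> intros <;> grind [posX₂, posZ₂]
    · refine h.listLE_of_le_of_getElem? (length_word₃ X Z hn) (fun _ => getElem?_word₃ X Z hn)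
        ?_ ?_ ?_ <;> intros <;> grind [posX₃, posZ₃]

end IsCrown

theorem isCrown_of_bijective {α : Type*} [PartialOrder α] [Fintype α] {n : ℕ} (hn : 1 < n)
    {x z : Fin n → α} (hbij : Function.Bijective (Sum.elim x z))
    (hlt : ∀ a b : α, a < b ↔ ∃ i : Fin n, (a = x i ∧ b = z i) ∨ (a = x (i + ⟨1, hn⟩) ∧ b = z i)) :
    IsCrown n (fun i => x ⟨i % n, Nat.mod_lt i (by omega)⟩)
      (fun i => z ⟨i % n, Nat.mod_lt i (by omega)⟩) := by
  have hmod : ∀ i : Fin n, (⟨i.val % n, Nat.mod_lt _ (by omega)⟩ : Fin n) = i :=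
    fun i => Fin.ext (Nat.mod_eq_of_lt i.isLt)
  have hsucc : ∀ i : Fin n, (⟨(i.val + 1) % n, Nat.mod_lt _ (by omega)⟩ : Fin n) = i + ⟨1, hn⟩ :=
    fun i => Fin.ext (by simp [Fin.val_add])
  refine ⟨?_, fun a => ?_, fun a b => ?_, ?_⟩
  · simp [← Fintype.card_of_bijective hbij, two_mul]
  · obtain ⟨i | i, rfl⟩ := hbij.2 a
    · exact ⟨i, i.isLt, .inl (by simp [hmod])⟩
    · exact ⟨i, i.isLt, .inr (by simp [hmod])⟩
  · rw [hlt]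
    constructor
    · rintro ⟨i, h⟩
      exact ⟨i, i.isLt, by simpa only [hmod, hsucc] using h⟩
    · rintro ⟨i, hi, h⟩
      have e₁ := hmod ⟨i, hi⟩
      have e₂ := hsucc ⟨i, hi⟩
      simp only at e₁ e₂
      rw [e₁, e₂] at h
      exact ⟨⟨i, hi⟩, h⟩
  · simp

/-- the explicit three words form a realizer of the crown `C_n`
(`n ≥ 2`); consequently the crown has dimension at most `3`. -/
theorem crown_realizer {α : Type*} [PartialOrder α] [Fintype α] [DecidableEq α]
    (n : ℕ) (hn : 2 ≤ n) (x z : Fin n → α)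
    (hbij : Function.Bijective (Sum.elim x z))
    (hlt : ∀ a b : α, a < b ↔ ∃ i : Fin n, (a = x i ∧ b = z i) ∨ (a = x (i + ⟨1, by omega⟩) ∧ b = z i)) :
    (let X : ℕ → α := fun i => x ⟨i % n, Nat.mod_lt i (by omega)⟩
     let Z : ℕ → α := fun i => z ⟨i % n, Nat.mod_lt i (by omega)⟩
     IsListRealizer
      [[X 0, X 1, Z 0] ++ ((List.range (n - 2)).flatMap fun i => [X (i + 2), Z (i + 1)]) ++ [Z (n - 1)],
       [X 1] ++ ((List.range (n - 2)).flatMap fun i => [X (i + 2), Z (i + 1)]) ++ [X 0, Z (n - 1), Z 0],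
       [X 0] ++ ((List.range (n - 1)).flatMap fun i => [X (n - 1 - i), Z (n - 1 - i)]) ++ [Z 0]]) ∧
    orderDim α ≤ 3 := by
  have hreal := (isCrown_of_bijective hn hbij hlt).isListRealizer_words hn
  exact ⟨hreal, orderDim_le_length_of_isListRealizer hreal⟩
end

section
/- For every n ≥ 3, the crown C_n has order dimension exactly 3; i.e., it admits a realizer of size 3 but no realizer of size 2. -/
/-! A realizer `L₀, L₁` of size two transitively orients the incomparability graph: `a → b` when
`L₀` puts `a` first and `L₁` puts `b` first. In the crown, `xᵢ ∥ xᵢ₊₁` and Gallai's forcing through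
`zᵢ, zᵢ₊₁` carries an orientation `xᵢ → xᵢ₊₁` over to `xᵢ₊₁ → xᵢ₊₂`; going once around the
cycle gives `x₀ → x₀`, which is absurd. Three explicit linear extensions realize the crown. -/

section Realizer

variable {α : Type*} [PartialOrder α]

theorem orderDim_eq_of_isRealizer {k : ℕ} {L : Fin k → α → α → Prop} (hL : IsRealizer L)
    (hmin : ∀ m < k, ∀ L' : Fin m → α → α → Prop, ¬ IsRealizer L') : orderDim α = k :=
  le_antisymm (Nat.sInf_le ⟨L, hL⟩)
    (le_csInf ⟨k, L, hL⟩ fun _ ⟨L', hL'⟩ => not_lt.1 fun hm => hmin _ hm L' hL')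

theorem isRealizer_of_rank {ι β : Type*} [LinearOrder β] (f : ι → α → β)
    (hinj : ∀ i, Function.Injective (f i)) (hmono : ∀ i, Monotone (f i))
    (hdet : ∀ a b, (∀ i, f i a ≤ f i b) → a ≤ b) :
    IsRealizer fun i a b => f i a ≤ f i b :=
  ⟨fun i => ⟨{ refl := fun _ => le_rfl
               trans := fun _ _ _ => le_trans
               antisymm := fun _ _ hab hba => hinj i (le_antisymm hab hba)
               total := fun _ _ => le_total _ _ }, fun _ _ hab => hmono i hab⟩,
   fun a b => ⟨fun hab i => hmono i hab, hdet a b⟩⟩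

theorem IsRealizer.total_of_subsingleton {ι : Type*} [Subsingleton ι] {L : ι → α → α → Prop}
    (hL : IsRealizer L) (a b : α) : a ≤ b ∨ b ≤ a := by
  rcases isEmpty_or_nonempty ι with hι | ⟨⟨i⟩⟩
  · exact .inl ((hL.2 a b).2 isEmptyElim)
  · refine ((hL.1 i).1.total a b).imp (fun h => (hL.2 a b).2 ?_) (fun h => (hL.2 b a).2 ?_) <;>
      exact fun j => Subsingleton.elim i j ▸ h

/-- `Q` is a transitive orientation of the incomparability graph. -/
structure IsIncompOrientation (Q : α → α → Prop) : Prop where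
  trans : ∀ {a b c}, Q a b → Q b c → Q a c
  incompRel : ∀ {a b}, Q a b → IncompRel (· ≤ ·) a b
  total : ∀ {a b}, IncompRel (· ≤ ·) a b → Q a b ∨ Q b a

namespace IsIncompOrientation

variable {Q : α → α → Prop}

theorem flip (hQ : IsIncompOrientation Q) : IsIncompOrientation (flip Q) :=
  ⟨fun hab hbc => hQ.trans hbc hab, fun h => (hQ.incompRel h).symm, fun h => (hQ.total h).symm⟩

theorem irrefl (hQ : IsIncompOrientation Q) (a : α) : ¬ Q a a :=
  fun h => (hQ.incompRel h).not_le le_rfl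

/-- Gallai's forcing in the configuration `a ≤ u ≥ b ≤ v ≥ c`. -/
theorem forcing (hQ : IsIncompOrientation Q) {a b c u v : α}
    (hbc : IncompRel (· ≤ ·) b c) (hav : IncompRel (· ≤ ·) a v) (hcu : IncompRel (· ≤ ·) c u)
    (huv : IncompRel (· ≤ ·) u v) (hau : a ≤ u) (hbu : b ≤ u) (hbv : b ≤ v) (hcv : c ≤ v)
    (hab : Q a b) : Q b c := by
  refine (hQ.total hbc).resolve_right fun hcb => ?_
  have hav' : Q a v := (hQ.total hav).resolve_right fun hva =>
    (hQ.incompRel (hQ.trans hva hab)).not_ge hbv |>.elim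
  have hcu' : Q c u := (hQ.total hcu).resolve_right fun huc =>
    (hQ.incompRel (hQ.trans huc hcb)).not_ge hbu |>.elim
  rcases hQ.total huv with huv' | hvu'
  · exact (hQ.incompRel (hQ.trans hcu' huv')).not_le hcv
  · exact (hQ.incompRel (hQ.trans hav' hvu')).not_le hau

end IsIncompOrientation

theorem IsRealizer.isIncompOrientation {L : Fin 2 → α → α → Prop} (hL : IsRealizer L) :
    IsIncompOrientation fun a b => L 0 a b ∧ L 1 b a ∧ a ≠ b := by
  have := (hL.1 0).1
  have := (hL.1 1).1
  refine ⟨?trans, ?incompRel, ?total⟩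
  case trans =>
    rintro a b c ⟨hab₀, hba₁, hab⟩ ⟨hbc₀, hcb₁, -⟩
    refine ⟨_root_.trans hab₀ hbc₀, _root_.trans hcb₁ hba₁, ?_⟩
    rintro rfl
    exact hab (antisymm hab₀ hbc₀)
  case incompRel =>
    rintro a b ⟨hab₀, hba₁, hab⟩
    exact ⟨fun h => hab (antisymm ((hL.2 a b).1 h 1) hba₁),
      fun h => hab (antisymm hab₀ ((hL.2 b a).1 h 0))⟩
  case total =>
    rintro a b ⟨hab, hba⟩
    have hne : a ≠ b := by rintro rfl; exact hab le_rfl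
    simp only [hL.2, not_forall, Fin.exists_fin_two] at hab hba
    rcases hab with hab | hab <;> rcases hba with hba | hba
    · exact ((total_of (L 0) a b).elim hab hba).elim
    · exact .inr ⟨(total_of (L 0) a b).resolve_left hab, (total_of (L 1) b a).resolve_left hba,
        hne.symm⟩
    · exact .inl ⟨(total_of (L 0) b a).resolve_left hba, (total_of (L 1) a b).resolve_left hab,
        hne⟩
    · exact ((total_of (L 1) a b).elim hab hba).elim

end Realizer

section Crown

open Fin.NatCast

variable {n : ℕ}

variable (n) in
/-- Positions of the crown's elements in three linear extensions. The first two run around the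
crown in opposite directions, placing each `zⱼ` right after the later of its two lower covers;
together they leave only `zₙ₋₁` versus `x₁, …, xₙ₋₂` unseparated, which the third handles. -/
def crownRank : Fin 3 → Fin n ⊕ Fin n → ℕ
  | 0 => Sum.elim (fun i => 2 * i) (fun j => 2 * j + 3)
  | 1 => Sum.elim (fun i => 2 * (n - 1 - i))
      (fun j => if (j : ℕ) = n - 1 then 2 * n + 1 else 2 * (n - 1 - j) + 1)
  | 2 => Sum.elim (fun i => if (i : ℕ) = n - 1 then 0 else if (i : ℕ) = 0 then 1 else i + 2)
      (fun j => if (j : ℕ) = n - 1 then 2 else n + 1 + j)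

theorem crownRank_injective (m : Fin 3) : Function.Injective (crownRank n m) := by
  rintro (i | i) (j | j) h <;> have := i.isLt <;> have := j.isLt <;>
    fin_cases m <;> simp only [crownRank, Sum.elim_inl, Sum.elim_inr, Sum.inl.injEq,
      Sum.inr.injEq, reduceCtorEq, Fin.ext_iff] at h ⊢ <;> (try split_ifs at h) <;> omega

variable [NeZero n]

theorem Fin.val_add_one_eq_ite (i : Fin n) :
    ((i + 1 : Fin n) : ℕ) = if (i : ℕ) + 1 = n then 0 else (i : ℕ) + 1 := by
  rw [Fin.val_add, Fin.val_one']
  have := i.isLt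
  split_ifs with h
  · rcases Nat.lt_or_ge 1 n with hn | hn
    · rw [Nat.mod_eq_of_lt hn, h, Nat.mod_self]
    · simp [show n = 1 by omega, Nat.mod_one]
  · rcases Nat.lt_or_ge 1 n with hn | hn
    · rw [Nat.mod_eq_of_lt hn, Nat.mod_eq_of_lt (by omega)]
    · omega

theorem Fin.self_ne_add_one (hn : 2 ≤ n) (i : Fin n) : i ≠ i + 1 := by
  rw [Ne, Fin.ext_iff, Fin.val_add_one_eq_ite]
  split_ifs <;> omega

theorem Fin.self_ne_add_one_add_one (hn : 3 ≤ n) (i : Fin n) : i ≠ i + 1 + 1 := by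
  rw [Ne, Fin.ext_iff, Fin.val_add_one_eq_ite, Fin.val_add_one_eq_ite]
  have := i.isLt
  split_ifs <;> omega

/-- The order of the crown on indices: `inl i` stands for `xᵢ` and `inr j` for `zⱼ`. -/
def CrownLE : Fin n ⊕ Fin n → Fin n ⊕ Fin n → Prop
  | .inl i, .inl j => i = j
  | .inl i, .inr j => i = j ∨ i = j + 1
  | .inr _, .inl _ => False
  | .inr i, .inr j => i = j

theorem crownRank_mono {s t : Fin n ⊕ Fin n} (h : CrownLE s t) (m : Fin 3) :
    crownRank n m s ≤ crownRank n m t := by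
  rcases s with i | i <;> rcases t with j | j <;> simp only [CrownLE] at h
  · rw [h]
  · have := j.isLt
    rcases h with rfl | rfl <;> fin_cases m <;>
      simp only [crownRank, Sum.elim_inl, Sum.elim_inr, Fin.val_add_one_eq_ite] <;>
      (try split_ifs) <;> omega
  · rw [h]

theorem crownLE_of_crownRank_le (hn : 3 ≤ n) {s t : Fin n ⊕ Fin n}
    (h : ∀ m, crownRank n m s ≤ crownRank n m t) : CrownLE s t := by
  have h₀ := h 0
  have h₁ := h 1
  have h₂ := h 2
  rcases s with i | i <;> rcases t with j | j <;> have := i.isLt <;> have := j.isLt <;>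
    simp only [crownRank, CrownLE, Sum.elim_inl, Sum.elim_inr, Fin.ext_iff,
      Fin.val_add_one_eq_ite] at h₀ h₁ h₂ ⊢ <;> split_ifs at h₀ h₁ h₂ ⊢ <;> omega

variable {α : Type*} [PartialOrder α]

variable (n) in
structure IsCrown_s4 (x z : Fin n → α) : Prop where
  bijective : Function.Bijective (Sum.elim x z)
  lt_iff : ∀ a b, a < b ↔ ∃ i, (a = x i ∧ b = z i) ∨ (a = x (i + 1) ∧ b = z i)

namespace IsCrown_s4

variable {x z : Fin n → α}

theorem le_iff (hc : IsCrown_s4 n x z) (s t : Fin n ⊕ Fin n) :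
    Sum.elim x z s ≤ Sum.elim x z t ↔ CrownLE s t := by
  have hinj := hc.bijective.injective
  have hx : ∀ i, x i = Sum.elim x z (.inl i) := fun _ => rfl
  have hz : ∀ i, z i = Sum.elim x z (.inr i) := fun _ => rfl
  rw [le_iff_eq_or_lt, hinj.eq_iff, hc.lt_iff]
  simp only [hx, hz, hinj.eq_iff]
  rcases s with i | i <;> rcases t with j | j <;> simp [CrownLE, exists_or, eq_comm]

theorem incompRel_iff (hc : IsCrown_s4 n x z) (s t : Fin n ⊕ Fin n) :
    IncompRel (· ≤ ·) (Sum.elim x z s) (Sum.elim x z t) ↔ ¬ CrownLE s t ∧ ¬ CrownLE t s := by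
  rw [IncompRel, hc.le_iff, hc.le_iff]

theorem incompRel_x_zero_x_one (hc : IsCrown_s4 n x z) (hn : 2 ≤ n) :
    IncompRel (· ≤ ·) (x 0) (x 1) :=
  (hc.incompRel_iff (.inl 0) (.inl 1)).2 <| by
    simpa [CrownLE, eq_comm] using Fin.self_ne_add_one hn 0

theorem orientation_step (hc : IsCrown_s4 n x z) (hn : 3 ≤ n) {Q : α → α → Prop}
    (hQ : IsIncompOrientation Q) (i : Fin n) (h : Q (x i) (x (i + 1))) :
    Q (x (i + 1)) (x (i + 1 + 1)) := by
  have h₁ := Fin.self_ne_add_one (by omega) i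
  have h₁' := Fin.self_ne_add_one (by omega) (i + 1)
  have h₂ := Fin.self_ne_add_one_add_one hn i
  refine hQ.forcing (u := z i) (v := z (i + 1))
    ((hc.incompRel_iff (.inl _) (.inl _)).2 ?_) ((hc.incompRel_iff (.inl _) (.inr _)).2 ?_)
    ((hc.incompRel_iff (.inl _) (.inr _)).2 ?_) ((hc.incompRel_iff (.inr _) (.inr _)).2 ?_)
    ((hc.le_iff (.inl _) (.inr _)).2 ?_) ((hc.le_iff (.inl _) (.inr _)).2 ?_)
    ((hc.le_iff (.inl _) (.inr _)).2 ?_) ((hc.le_iff (.inl _) (.inr _)).2 ?_) h <;>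
    simp [CrownLE, h₁, h₁', h₂, Ne.symm h₁, Ne.symm h₁', Ne.symm h₂]

theorem not_orientation_zero_one (hc : IsCrown_s4 n x z) (hn : 3 ≤ n) {Q : α → α → Prop}
    (hQ : IsIncompOrientation Q) : ¬ Q (x 0) (x 1) := by
  intro h₀₁
  have hstep (k : ℕ) : Q (x k) (x (k + 1)) := by
    induction k with
    | zero => simpa using h₀₁
    | succ k ih => simpa using hc.orientation_step hn hQ _ ih
  have hchain (k : ℕ) : Q (x 0) (x (k + 1)) := by
    induction k with
    | zero => simpa using h₀₁
    | succ k ih => exact hQ.trans ih (by simpa using hstep (k + 1))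
  have hlast : ((n - 1 : ℕ) : Fin n) + 1 = 0 := by
    rw [← Nat.cast_add_one, Nat.sub_add_cancel NeZero.one_le, Fin.natCast_self]
  exact hQ.irrefl _ (hlast ▸ hchain (n - 1))

theorem not_isRealizer (hc : IsCrown_s4 n x z) (hn : 3 ≤ n) {m : ℕ} (hm : m < 3)
    (L : Fin m → α → α → Prop) : ¬ IsRealizer L := by
  intro hL
  have hinc := hc.incompRel_x_zero_x_one (by omega)
  interval_cases m
  · exact (hL.total_of_subsingleton _ _).elim hinc.1 hinc.2
  · exact (hL.total_of_subsingleton _ _).elim hinc.1 hinc.2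
  · have hQ := hL.isIncompOrientation
    exact (hQ.total hinc).elim (hc.not_orientation_zero_one hn hQ)
      (hc.not_orientation_zero_one hn hQ.flip)

theorem exists_isRealizer (hc : IsCrown_s4 n x z) (hn : 3 ≤ n) :
    ∃ L : Fin 3 → α → α → Prop, IsRealizer L := by
  let e := Equiv.ofBijective _ hc.bijective
  have hle (a b : α) : a ≤ b ↔ CrownLE (e.symm a) (e.symm b) := by
    rw [← hc.le_iff]
    exact Iff.of_eq (congrArg₂ _ (e.apply_symm_apply a).symm (e.apply_symm_apply b).symm)
  exact ⟨_, isRealizer_of_rank (fun m a => crownRank n m (e.symm a))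
    (fun m => (crownRank_injective m).comp e.symm.injective)
    (fun m _ _ hab => crownRank_mono ((hle _ _).1 hab) m)
    (fun a b h => (hle a b).2 (crownLE_of_crownRank_le hn h))⟩

end IsCrown_s4

end Crown

/-- for `n ≥ 3` the crown `C_n` has order dimension exactly `3`. -/
theorem crown_dim_eq_three {α : Type*} [PartialOrder α]
    (n : ℕ) (hn : 3 ≤ n) (x z : Fin n → α)
    (hbij : Function.Bijective (Sum.elim x z))
    (hlt : ∀ a b : α, a < b ↔ ∃ i : Fin n, (a = x i ∧ b = z i) ∨ (a = x (i + ⟨1, by omega⟩) ∧ b = z i)) :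
    orderDim α = 3 := by
  have : NeZero n := ⟨by omega⟩
  have hone : (⟨1, by omega⟩ : Fin n) = 1 := Fin.ext (Nat.mod_eq_of_lt (by omega)).symm
  have hc : IsCrown_s4 n x z := ⟨hbij, by simpa only [hone] using hlt⟩
  obtain ⟨L, hL⟩ := hc.exists_isRealizer hn
  exact orderDim_eq_of_isRealizer hL fun _ hm => hc.not_isRealizer hn hm
end

section
/- A finite poset whose cover graph (undirected Hasse diagram) is a tree and which has a minimum element has order dimension at most 2. -/
/-!
If `m` is the minimum, every `x` is reached from `m` by a walk going up along covers, and such a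
walk is a path; in a tree it is therefore the unique path from `m` to `x`. Consequently `a ≤ b`
iff the path to `a` is a prefix of the path to `b`: the poset embeds into words under the prefix
order. The prefix order is the intersection of the two lexicographic orders induced by a linear
order of the alphabet and by its reverse, so two linear extensions suffice.
-/

open List SimpleGraph

theorem List.isPrefix_of_lex_of_lex_swap {β : Type*} {r : β → β → Prop} [Std.Asymm r] :
    ∀ {l₁ l₂ : List β}, Lex r l₁ l₂ → Lex (Function.swap r) l₁ l₂ → l₁ <+: l₂
  | _, _, .nil, _ => nil_prefix
  | _, _, .cons h, .cons h' => cons_prefix_cons.2 ⟨rfl, isPrefix_of_lex_of_lex_swap h h'⟩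
  | _, _, .cons _, .rel h' => (asymm h' h').elim
  | _, _, .rel h, .cons _ => (asymm h h).elim
  | _, _, .rel h, .rel h' => (asymm h h').elim

theorem List.IsPrefix.eq_or_lex {β : Type*} (r : β → β → Prop) {l₁ l₂ : List β}
    (h : l₁ <+: l₂) : l₁ = l₂ ∨ Lex r l₁ l₂ := by
  obtain ⟨_ | ⟨b, t⟩, rfl⟩ := h
  · exact .inl (append_nil l₁).symm
  · simpa using Lex.append_left r (Lex.nil (a := b) (l := t)) l₁

theorem isLinearOrder_eq_or_of_isStrictTotalOrder {γ : Type*} (s : γ → γ → Prop)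
    [IsStrictTotalOrder γ s] : IsLinearOrder γ fun a b => a = b ∨ s a b := by
  classical
  -- `linearOrderOfSTO s` has `≤` definitionally equal to `fun a b => a = b ∨ s a b`
  exact @instIsLinearOrderLe γ (linearOrderOfSTO s)

section PrefixCode

variable {α β : Type*} [PartialOrder α] {S : α → List β}

theorem injective_of_le_iff_isPrefix (hS : ∀ a b, a ≤ b ↔ S a <+: S b) : S.Injective :=
  fun a b h => le_antisymm ((hS a b).2 (h ▸ prefix_rfl)) ((hS b a).2 (h ▸ prefix_rfl))

theorem isLinExt_lex_of_le_iff_isPrefix (r : β → β → Prop) [IsStrictTotalOrder β r]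
    (hS : ∀ a b, a ≤ b ↔ S a <+: S b) : IsLinExt fun a b => a = b ∨ Lex r (S a) (S b) := by
  have hinj := injective_of_le_iff_isPrefix hS
  have : IsStrictTotalOrder (List β) (Lex r) := { isStrictWeakOrder_of_isOrderConnected with }
  have : IsStrictTotalOrder α (S ⁻¹'o Lex r) :=
    (RelEmbedding.preimage ⟨S, hinj⟩ (Lex r)).isStrictTotalOrder
  exact ⟨isLinearOrder_eq_or_of_isStrictTotalOrder (S ⁻¹'o Lex r),
    fun a b hab => ((hS a b).1 hab).eq_or_lex r |>.imp_left (@hinj a b)⟩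

theorem orderDim_le_two_of_le_iff_isPrefix (hS : ∀ a b, a ≤ b ↔ S a <+: S b) :
    orderDim α ≤ 2 := by
  let r : β → β → Prop := WellOrderingRel
  have h₁ := isLinExt_lex_of_le_iff_isPrefix r hS
  have h₂ := isLinExt_lex_of_le_iff_isPrefix (Function.swap r) hS
  refine Nat.sInf_le ⟨![_, _], Fin.forall_fin_two.2 ⟨h₁, h₂⟩, fun a b => ?_⟩
  rw [Fin.forall_fin_two]
  refine ⟨fun hab => ⟨h₁.2 a b hab, h₂.2 a b hab⟩, ?_⟩
  rintro ⟨hab | hlex, hab | hlex'⟩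
  exacts [hab.le, hab.le, hab.le, (hS a b).2 (isPrefix_of_lex_of_lex_swap hlex hlex')]

end PrefixCode

section CoverGraph

namespace SimpleGraph.Walk

variable {V : Type*} {G : SimpleGraph V} {u v w : V}

theorem isPath_of_isChain_lt [Preorder V] (p : G.Walk u v)
    (hp : p.support.IsChain (· < ·)) : p.IsPath :=
  (isPath_def p).2 ((isChain_iff_pairwise.1 hp).imp ne_of_lt)

theorem le_of_mem_support_of_isChain_le [Preorder V] (p : G.Walk u v)
    (hp : p.support.IsChain (· ≤ ·)) {x : V} (hx : x ∈ p.support) : x ≤ v :=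
  hp.backwards_induction (· ≤ v) _ (fun _ _ => le_trans) (fun _ => (getLast_support p).le) x hx

theorem isChain_support_append {R : V → V → Prop} (p : G.Walk u v)
    (q : G.Walk v w) (hp : p.support.IsChain R) (hq : q.support.IsChain R) :
    (p.append q).support.IsChain R := by
  rw [support_append]
  rw [← cons_tail_support q] at hq
  refine hp.append hq.tail fun x hx y hy => ?_
  rw [getLast?_eq_some_getLast (by simp), getLast_support, Option.mem_some_iff] at hx
  exact hx ▸ (isChain_cons.1 hq).1 y hy

end SimpleGraph.Walk

variable {α : Type*} [PartialOrder α]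

theorem CovBy.coverGraph_adj {a b : α} (h : a ⋖ b) : (coverGraph α).Adj a b :=
  .inl h

theorem exists_coverGraph_walk_isChain_covBy [LocallyFiniteOrder α] {a b : α} (hab : a ≤ b) :
    ∃ p : (coverGraph α).Walk a b, p.support.IsChain (· ⋖ ·) := by
  have h := le_iff_reflTransGen_covBy.1 hab
  clear hab
  induction h using Relation.ReflTransGen.head_induction_on with
  | refl => exact ⟨.nil, .singleton _⟩
  | head hcov _ ih =>
    obtain ⟨p, hp⟩ := ih
    refine ⟨.cons hcov.coverGraph_adj p, ?_⟩
    rw [← Walk.cons_tail_support p] at hp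
    rw [Walk.support_cons, ← Walk.cons_tail_support p]
    exact hp.cons_cons hcov

theorem le_iff_isPrefix_support_of_isAcyclic [LocallyFiniteOrder α]
    (hG : (coverGraph α).IsAcyclic) {m : α} {p : ∀ x, (coverGraph α).Walk m x}
    (hp : ∀ x, (p x).support.IsChain (· ⋖ ·)) (a b : α) :
    a ≤ b ↔ (p a).support <+: (p b).support := by
  have isPath {x : α} (q : (coverGraph α).Walk m x) (hq : q.support.IsChain (· ⋖ ·)) :
      q.IsPath := q.isPath_of_isChain_lt (hq.imp fun _ _ h => h.lt)
  refine ⟨fun hab => ?_, fun hpre => ?_⟩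
  · obtain ⟨q, hq⟩ := exists_coverGraph_walk_isChain_covBy hab
    have hchain := (p a).isChain_support_append q (hp a) hq
    have happend : (p a).append q = p b := congrArg Subtype.val <|
      (hG.subsingleton_path m b).elim ⟨_, isPath _ hchain⟩ ⟨_, isPath _ (hp b)⟩
    exact ⟨q.support.tail, happend ▸ (Walk.support_append _ _).symm⟩
  · exact (p b).le_of_mem_support_of_isChain_le ((hp b).imp fun _ _ h => h.le)
      (hpre.subset (Walk.end_mem_support _))

end CoverGraph

/-- a finite tree poset with a minimum element has dimension at
most `2`. -/
theorem tree_with_min_dim_le_two {α : Type*} [PartialOrder α] [Fintype α]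
    (ht : (coverGraph α).IsTree) (hmin : ∃ m : α, ∀ w : α, m ≤ w) :
    orderDim α ≤ 2 := by
  classical
  let : LocallyFiniteOrder α := Fintype.toLocallyFiniteOrder
  obtain ⟨m, hm⟩ := hmin
  choose p hp using fun x => exists_coverGraph_walk_isChain_covBy (hm x)
  exact orderDim_le_two_of_le_iff_isPrefix (le_iff_isPrefix_support_of_isAcyclic ht.isAcyclic hp)
end

section
/- A finite poset whose cover graph is a tree and which has a maximum element has order dimension at most 2. -/
/-!
Because the maximum `m` lies above everything and paths in a tree are unique, the path from `m`
to `x` in the cover graph is a descending chain of covers, and `x ≤ y` exactly when the path to `y`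
is a prefix of the path to `x`. A poset embedded in words under reverse prefix order is realized
by two lexicographic orders, one for a linear order of the letters and one for its reverse, each
placing a word after all of its proper extensions.
-/

open Function OrderDual

theorem List.cons_le_cons_iff_of_linearOrder {γ : Type*} [LinearOrder γ] {a b : γ}
    {u v : List γ} : a :: u ≤ b :: v ↔ a < b ∨ a = b ∧ u ≤ v := by
  rw [le_iff_lt_or_eq, le_iff_lt_or_eq, List.cons_lt_cons_iff, List.cons_eq_cons]
  tauto

/-- Ending every word with the letter `⊤` makes the lexicographic order put each word after all
of its proper extensions. -/
def endMarked {β : Type*} (w : List β) : List (WithTop β) := w.map (↑) ++ [⊤]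

section EndMarked

variable {β : Type*}

@[simp]
theorem endMarked_nil : endMarked ([] : List β) = [⊤] := rfl

@[simp]
theorem endMarked_cons (a : β) (w : List β) : endMarked (a :: w) = ↑a :: endMarked w := rfl

theorem endMarked_injective : Injective (endMarked : List β → List (WithTop β)) := fun _ _ h =>
  List.map_injective_iff.2 WithTop.coe_injective (List.append_cancel_right h)

variable [LinearOrder β]

theorem endMarked_le_of_isPrefix {u v : List β} (h : v <+: u) : endMarked u ≤ endMarked v := by
  obtain ⟨t, rfl⟩ := h
  induction v with
  | nil =>
    cases t with
    | nil => exact le_rfl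
    | cons c t => exact le_of_lt (List.cons_lt_cons_iff.2 (Or.inl (WithTop.coe_lt_top c)))
  | cons b v ih => exact List.cons_le_cons _ ih

theorem isPrefix_of_endMarked_le {u v : List β} (h : endMarked u ≤ endMarked v)
    (hdual : endMarked (u.map toDual) ≤ endMarked (v.map toDual)) : v <+: u := by
  induction u generalizing v with
  | nil =>
    cases v with
    | nil => exact List.prefix_refl _
    | cons b v =>
      simp [List.cons_le_cons_iff_of_linearOrder] at h
  | cons a u ih =>
    cases v with
    | nil => exact List.nil_prefix
    | cons b v =>
      simp only [List.map_cons, endMarked_cons, List.cons_le_cons_iff_of_linearOrder,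
        WithTop.coe_lt_coe, WithTop.coe_inj, toDual_lt_toDual, EmbeddingLike.apply_eq_iff_eq]
        at h hdual
      obtain ⟨rfl, htail, hdual_tail⟩ : a = b ∧ endMarked u ≤ endMarked v ∧
          endMarked (u.map toDual) ≤ endMarked (v.map toDual) := by
        rcases h with h | h <;> rcases hdual with h' | h'
        · exact absurd h (lt_asymm h')
        · exact absurd h'.1 h.ne
        · exact absurd h.1 h'.ne'
        · exact ⟨h.1, h.2, h'.2⟩
      exact (List.prefix_cons_inj a).2 (ih htail hdual_tail)

end EndMarked

section Realizer

variable {α : Type*} [PartialOrder α]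

theorem isLinExt_of_injective_of_monotone {γ : Type*} [LinearOrder γ] {f : α → γ}
    (hf : Injective f) (hmono : Monotone f) : IsLinExt fun a b => f a ≤ f b :=
  ⟨{ refl := fun _ => le_rfl
     trans := fun _ _ _ => le_trans
     antisymm := fun _ _ hab hba => hf (le_antisymm hab hba)
     total := fun a b => le_total (f a) (f b) },
    fun _ _ => (hmono ·)⟩

theorem orderDim_le_two_of_isLinExt {L₁ L₂ : α → α → Prop} (h₁ : IsLinExt L₁) (h₂ : IsLinExt L₂)
    (h : ∀ a b, L₁ a b → L₂ a b → a ≤ b) : orderDim α ≤ 2 := by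
  refine Nat.sInf_le ⟨![L₁, L₂], fun i => ?_, fun a b => ⟨fun hab i => ?_, fun hL => ?_⟩⟩
  · fin_cases i
    exacts [h₁, h₂]
  · fin_cases i
    exacts [h₁.2 a b hab, h₂.2 a b hab]
  · exact h a b (hL 0) (hL 1)

theorem orderDim_le_two_of_le_iff_isPrefix_s7 {β : Type*} (P : α → List β)
    (hP : ∀ x y, x ≤ y ↔ P y <+: P x) : orderDim α ≤ 2 := by
  -- any linear order of the letters will do
  let _ : LinearOrder β := IsWellOrder.linearOrder WellOrderingRel
  have hPinj : Injective P := fun x y hxy =>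
    le_antisymm ((hP x y).2 (hxy ▸ List.prefix_refl _)) ((hP y x).2 (hxy ▸ List.prefix_refl _))
  have hext : IsLinExt fun x y => endMarked (P x) ≤ endMarked (P y) :=
    isLinExt_of_injective_of_monotone (endMarked_injective.comp hPinj) fun x y hxy =>
      endMarked_le_of_isPrefix ((hP x y).1 hxy)
  have hext_dual :
      IsLinExt fun x y => endMarked ((P x).map toDual) ≤ endMarked ((P y).map toDual) :=
    isLinExt_of_injective_of_monotone
      (endMarked_injective.comp ((List.map_injective_iff.2 toDual.injective).comp hPinj))
      fun x y hxy => endMarked_le_of_isPrefix (((hP x y).1 hxy).map toDual)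
  exact orderDim_le_two_of_isLinExt hext hext_dual fun x y h₁ h₂ =>
    (hP x y).2 (isPrefix_of_endMarked_le h₁ h₂)

end Realizer

section RootedTree

open SimpleGraph

variable {α : Type*} [PartialOrder α]

theorem exists_descending_walk_of_le [IsStronglyCoatomic α] [WellFoundedLT α] {x y : α}
    (h : x ≤ y) : ∃ w : (coverGraph α).Walk y x,
      w.support.Pairwise (· > ·) ∧ ∀ a ∈ w.support, a ∈ Set.Icc x y := by
  induction y using WellFoundedLT.induction with
  | ind y ih =>
    rcases h.lt_or_eq with hlt | rfl
    · obtain ⟨z, hxz, hzy⟩ := exists_le_covBy_of_lt hlt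
      obtain ⟨w, hw_desc, hw_mem⟩ := ih z hzy.lt hxz
      refine ⟨.cons (show (coverGraph α).Adj y z from Or.inr hzy) w, ?_, ?_⟩
      · rw [Walk.support_cons, List.pairwise_cons]
        exact ⟨fun a ha => (hw_mem a ha).2.trans_lt hzy.lt, hw_desc⟩
      · simp only [Walk.support_cons, List.forall_mem_cons]
        exact ⟨⟨hlt.le, le_rfl⟩, fun a ha => ⟨(hw_mem a ha).1, (hw_mem a ha).2.trans hzy.le⟩⟩
    · exact ⟨.nil, by simp, by simp⟩

variable (ht : (coverGraph α).IsTree)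

noncomputable def rootPath (m x : α) : (coverGraph α).Walk m x :=
  (ht.existsUnique_path m x).choose

theorem rootPath_isPath (m x : α) : (rootPath ht m x).IsPath :=
  (ht.existsUnique_path m x).choose_spec.1

theorem eq_rootPath {m x : α} {p : (coverGraph α).Walk m x} (hp : p.IsPath) :
    p = rootPath ht m x :=
  (ht.existsUnique_path m x).choose_spec.2 p hp

variable [IsStronglyCoatomic α] [WellFoundedLT α] {m : α} (hm : ∀ x, x ≤ m)
include hm

theorem le_of_mem_support_rootPath {x a : α} (ha : a ∈ (rootPath ht m x).support) : x ≤ a := by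
  obtain ⟨w, hw_desc, hw_mem⟩ := exists_descending_walk_of_le (hm x)
  rw [← eq_rootPath ht (w.isPath_def.2 (hw_desc.imp ne_of_gt))] at ha
  exact (hw_mem a ha).1

theorem support_rootPath_isPrefix_of_le {x y : α} (h : x ≤ y) :
    (rootPath ht m y).support <+: (rootPath ht m x).support := by
  obtain ⟨w, hw_desc, -⟩ := exists_descending_walk_of_le h
  rw [← w.cons_tail_support, List.pairwise_cons] at hw_desc
  have hpath : ((rootPath ht m y).append w).IsPath := by
    rw [Walk.isPath_def, Walk.support_append]
    refine (rootPath_isPath ht m y).support_nodup.append (hw_desc.2.imp ne_of_gt) ?_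
    exact fun a ha ha' => (hw_desc.1 a ha').not_ge (le_of_mem_support_rootPath ht hm ha)
  rw [← eq_rootPath ht hpath, Walk.support_append]
  exact List.prefix_append _ _

theorem le_iff_support_rootPath_isPrefix {x y : α} :
    x ≤ y ↔ (rootPath ht m y).support <+: (rootPath ht m x).support :=
  ⟨support_rootPath_isPrefix_of_le ht hm, fun h =>
    le_of_mem_support_rootPath ht hm (h.subset (rootPath ht m y).end_mem_support)⟩

end RootedTree

/-- a finite tree poset with a maximum element has dimension at
most `2`. -/
theorem tree_with_max_dim_le_two {α : Type*} [PartialOrder α] [Fintype α]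
    (ht : (coverGraph α).IsTree) (hmax : ∃ m : α, ∀ w : α, w ≤ m) :
    orderDim α ≤ 2 := by
  obtain ⟨m, hm⟩ := hmax
  exact orderDim_le_two_of_le_iff_isPrefix_s7 (fun x => (rootPath ht m x).support)
    fun _ _ => le_iff_support_rootPath_isPrefix ht hm
end

section
/- Let T be a finite tree poset and let a be a minimal element of T. Then there exist linear extensions U^- of U_a^-, U^+ of U_a^+, and U_1, U_2 of U_a such that the three linear orders U^- a U^+, a U_1, and a U_2 form a realizer of T. In particular, a finite tree poset with a distinguished minimal element a has a realizer of size 3 in which a occurs first in two of the three linear extensions. -/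
/-!
We prove a stronger statement for every root `u`, minimal or not: there is a realizer `X, Y, Z`
in which `X` lists the elements not above `u`, then `u`, then those above `u`; `Y` lists the
elements below `u`, then `u`, then the rest; and `Z` begins with `u` if `u` is minimal. Asking
also that `Z` end with `u` if `u` is maximal makes the invariant self-dual. For minimal `u`,
`Y` and `Z` then begin with `u`.

Deleting `u` splits the tree into branches, one per neighbour `b` of `u`. Each branch is a tree
poset, so by induction it has such a realizer `X_C = X⁻ b X⁺, Y_C, Z_C` rooted at `b`, and every
comparability between two branches passes through `u`. The branches are attached to `u` one at
a time. For a branch above `u` (`u ⋖ b`) the new lists are `X⁻ X b X⁺`, `Y` with `Y_C` inserted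
right after `u`, and `Z Z_C`. An incomparable pair of an old `s` and a new `c` has `s` before
`c` in `Z`, and `c` before `s` in `X` if `c` is not above `u`, in `Y` otherwise. A branch below
`u` is attached by the order-dual construction.
-/

open scoped List

namespace List

variable {α : Type*}

theorem Pairwise.append_middle {R : α → α → Prop} {l₁ l₂ m : List α}
    (h : (l₁ ++ l₂).Pairwise R) (hm : m.Pairwise R) (h₁ : ∀ a ∈ l₁, ∀ c ∈ m, R a c)
    (h₂ : ∀ c ∈ m, ∀ b ∈ l₂, R c b) : (l₁ ++ m ++ l₂).Pairwise R := by
  simp only [pairwise_append, mem_append] at *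
  grind

theorem Nodup.pairwise_idxOf_lt [DecidableEq α] {l : List α} (hl : l.Nodup) :
    l.Pairwise (fun a b => l.idxOf a < l.idxOf b) := by
  rw [pairwise_iff_getElem]
  intro i j hi hj hij
  rwa [hl.idxOf_getElem, hl.idxOf_getElem]

theorem pair_sublist_append {l₁ l₂ : List α} {x y : α} (hx : x ∈ l₁) (hy : y ∈ l₂) :
    [x, y] <+ l₁ ++ l₂ :=
  (singleton_sublist.2 hx).append (singleton_sublist.2 hy)

end List

namespace SimpleGraph

variable {V : Type*} (G : SimpleGraph V)

/-- For a neighbour `b` of `u` in a tree, the component of `b` once `u` is deleted. -/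
def branch (u b : V) : Set V := {w | ∃ p : G.Walk b w, u ∉ p.support}

variable {G} {u b b' w z : V}

theorem mem_branch_self (h : b ≠ u) : b ∈ G.branch u b :=
  ⟨.nil, by simpa using h.symm⟩

theorem ne_of_mem_branch (hw : w ∈ G.branch u b) : w ≠ u := by
  rintro rfl
  obtain ⟨p, hp⟩ := hw
  exact hp p.end_mem_support

theorem mem_branch_of_walk (hw : w ∈ G.branch u b) (q : G.Walk w z) (hq : u ∉ q.support) :
    z ∈ G.branch u b :=
  let ⟨p, hp⟩ := hw
  ⟨p.append q, by simp [Walk.mem_support_append_iff, hp, hq]⟩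

theorem IsAcyclic.eq_of_mem_branch (hG : G.IsAcyclic) (hb : G.Adj u b) (hb' : G.Adj u b')
    (hw : w ∈ G.branch u b) (hw' : w ∈ G.branch u b') : b = b' := by
  classical
  obtain ⟨p', hp'⟩ := hw'
  obtain ⟨q, hq⟩ := mem_branch_of_walk hw p'.reverse (by simpa using hp')
  have hpath : (Walk.cons hb q.bypass).IsPath :=
    Walk.IsPath.cons q.bypass_isPath fun h => hq (q.support_bypass_subset_support h)
  simpa using (hG.eq_snd_of_adj_start hpath hb' (by simp)).symm

theorem Connected.exists_mem_branch (hG : G.Connected) (hw : w ≠ u) :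
    ∃ b, G.Adj u b ∧ w ∈ G.branch u b := by
  classical
  obtain ⟨p, hp⟩ := (hG u w).some.toPath
  have hnil : ¬ p.Nil := fun h => hw h.eq.symm
  refine ⟨p.snd, p.adj_snd hnil, p.tail, fun hu => ?_⟩
  have := hp.support_nodup
  rw [← Walk.cons_support_tail hnil, List.nodup_cons] at this
  exact this.1 hu

theorem induce_branch_connected (h : b ≠ u) : (G.induce (G.branch u b)).Connected := by
  classical
  rw [connected_iff_exists_forall_reachable]
  refine ⟨⟨b, mem_branch_self h⟩, fun ⟨w, p, hp⟩ => ?_⟩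
  have hsub : ∀ z ∈ p.support, z ∈ G.branch u b := fun z hz =>
    ⟨p.takeUntil z hz, fun hu => hp (p.support_takeUntil_subset_support hz hu)⟩
  exact (p.induce _ hsub).reachable

end SimpleGraph

namespace TreePoset

open OrderDual SimpleGraph

variable {α β : Type*} [PartialOrder α] [PartialOrder β]

/-- The condition `¬ y ≤ x` for `x` before `y` excludes repetitions and inversions at once. -/
def IsLinExtList (S : Set α) (l : List α) : Prop :=
  (∀ w, w ∈ l ↔ w ∈ S) ∧ l.Pairwise (fun x y => ¬ y ≤ x)

namespace IsLinExtList

variable {S C : Set α} {l : List α}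

theorem nodup (h : IsLinExtList S l) : l.Nodup :=
  h.2.imp fun hxy hxy' => hxy (le_of_eq hxy'.symm)

theorem mem (h : IsLinExtList S l) {w : α} (hw : w ∈ l) : w ∈ S :=
  (h.1 w).1 hw

theorem append_middle {l₁ l₂ m : List α} (h : IsLinExtList S (l₁ ++ l₂))
    (hm : IsLinExtList C m) (h₁ : ∀ a ∈ l₁, ∀ c ∈ m, ¬ c ≤ a)
    (h₂ : ∀ c ∈ m, ∀ b ∈ l₂, ¬ b ≤ c) : IsLinExtList (S ∪ C) (l₁ ++ m ++ l₂) := by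
  refine ⟨fun w => ?_, h.2.append_middle hm.2 h₁ h₂⟩
  have := h.1 w
  have := hm.1 w
  simp only [List.mem_append, Set.mem_union] at *
  tauto

theorem map (h : IsLinExtList S l) (f : α ↪o β) : IsLinExtList (f '' S) (l.map f) := by
  refine ⟨fun w => ?_, List.pairwise_map.2 (h.2.imp fun hab => by simpa using hab)⟩
  simp only [List.mem_map, Set.mem_image, h.1]

theorem dual (h : IsLinExtList S l) :
    IsLinExtList (ofDual ⁻¹' S) (l.reverse.map toDual) := by
  refine ⟨fun w => ?_, List.pairwise_map.2 (List.pairwise_reverse.2 h.2)⟩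
  obtain ⟨w, rfl⟩ := toDual.surjective w
  simp [h.1]

theorem idxOf_lt_idxOf [DecidableEq α] (h : IsLinExtList S l) {a b : α} (ha : a ∈ S)
    (hb : b ∈ S) (hab : a < b) : l.idxOf a < l.idxOf b := by
  rw [← h.1] at ha hb
  by_contra hba
  rcases (not_lt.1 hba).lt_or_eq with hlt | heq
  · have := List.pairwise_iff_getElem.1 h.2 _ _ (List.idxOf_lt_length_of_mem hb)
      (List.idxOf_lt_length_of_mem ha) hlt
    simp only [List.getElem_idxOf] at this
    exact this hab.le
  · exact hab.ne ((List.idxOf_inj hb).1 heq).symm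

theorem listLE_of_le [DecidableEq α] (h : IsLinExtList S l) {a b : α} (ha : a ∈ S)
    (hb : b ∈ S) (hab : a ≤ b) : listLE l a b := by
  rcases hab.lt_or_eq with hlt | rfl
  · exact (h.idxOf_lt_idxOf ha hb hlt).le
  · exact le_rfl

theorem not_listLE [DecidableEq α] (h : IsLinExtList S l) {a b : α} (hba : [b, a] <+ l) :
    ¬ listLE l a b := by
  have := h.nodup.pairwise_idxOf_lt.sublist hba
  simp only [List.pairwise_cons, List.mem_singleton, forall_eq] at this
  unfold listLE
  omega

end IsLinExtList

structure IsRootedRealizer (S : Set α) (u : α) (xa xp ya yp z : List α) : Prop where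
  linExt_x : IsLinExtList S (xa ++ u :: xp)
  linExt_y : IsLinExtList S (ya ++ u :: yp)
  linExt_z : IsLinExtList S z
  mem_xp : ∀ w, w ∈ xp ↔ w ∈ S ∧ u < w
  mem_ya : ∀ w, w ∈ ya ↔ w ∈ S ∧ w < u
  head_z : (∀ c ∈ S, ¬ c < u) → z.head? = some u
  getLast_z : (∀ c ∈ S, ¬ u < c) → z.getLast? = some u
  realize : ∀ x ∈ S, ∀ y ∈ S, ¬ x ≤ y → ¬ y ≤ x →
    [y, x] <+ xa ++ u :: xp ∨ [y, x] <+ ya ++ u :: yp ∨ [y, x] <+ z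

def HasRootedRealizer (S : Set α) (u : α) : Prop :=
  ∃ xa xp ya yp z, IsRootedRealizer S u xa xp ya yp z

def Separates (u : α) (S C : Set α) : Prop :=
  ∀ x ∈ S, ∀ y ∈ C, x ≠ y ∧ (x < y → x ≤ u ∧ u < y) ∧ (y < x → y < u ∧ u ≤ x)

theorem Separates.dual {u : α} {S C : Set α} (h : Separates u S C) :
    Separates (toDual u) (ofDual ⁻¹' S) (ofDual ⁻¹' C) := fun _ hx _ hy =>
  let ⟨hne, hlt, hgt⟩ := h _ hx _ hy
  ⟨hne, fun h => (hgt h).symm, fun h => (hlt h).symm⟩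

namespace IsRootedRealizer

variable {S C : Set α} {u b : α} {xa xp ya yp z xa' xp' ya' yp' z' : List α}

theorem mem_xa (h : IsRootedRealizer S u xa xp ya yp z) (w : α) :
    w ∈ xa ↔ w ∈ S ∧ ¬ u ≤ w := by
  have hnd := h.linExt_x.nodup
  have hmem := h.linExt_x.1 w
  have hxp := h.mem_xp w
  simp only [List.nodup_append, List.nodup_cons, List.mem_append, List.mem_cons] at hnd hmem
  rw [le_iff_eq_or_lt]
  grind

theorem mem_yp (h : IsRootedRealizer S u xa xp ya yp z) (w : α) :
    w ∈ yp ↔ w ∈ S ∧ ¬ w ≤ u := by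
  have hnd := h.linExt_y.nodup
  have hmem := h.linExt_y.1 w
  have hya := h.mem_ya w
  simp only [List.nodup_append, List.nodup_cons, List.mem_append, List.mem_cons] at hnd hmem
  rw [le_iff_eq_or_lt]
  grind

theorem root_mem (h : IsRootedRealizer S u xa xp ya yp z) : u ∈ S :=
  h.linExt_x.mem (by simp)

theorem singleton (u : α) : IsRootedRealizer {u} u [] [] [] [] [u] where
  linExt_x := ⟨by simp, by simp⟩
  linExt_y := ⟨by simp, by simp⟩
  linExt_z := ⟨by simp, by simp⟩
  mem_xp := by simp
  mem_ya := by simp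
  head_z := by simp
  getLast_z := by simp
  realize := by simp

theorem map (h : IsRootedRealizer S u xa xp ya yp z) (f : α ↪o β) :
    IsRootedRealizer (f '' S) (f u) (xa.map f) (xp.map f) (ya.map f) (yp.map f) (z.map f) where
  linExt_x := by simpa using h.linExt_x.map f
  linExt_y := by simpa using h.linExt_y.map f
  linExt_z := h.linExt_z.map f
  mem_xp w := by aesop (add simp h.mem_xp)
  mem_ya w := by aesop (add simp h.mem_ya)
  head_z hmin := by simp [h.head_z fun c hc => by simpa using hmin (f c) ⟨c, hc, rfl⟩]
  getLast_z hmax := by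
    simp [List.getLast?_map, h.getLast_z fun c hc => by simpa using hmax (f c) ⟨c, hc, rfl⟩]
  realize := by
    rintro _ ⟨x, hx, rfl⟩ _ ⟨y, hy, rfl⟩ hxy hyx
    simp only [f.le_iff_le] at hxy hyx
    have hmap : ∀ {l : List α}, [y, x] <+ l → [f y, f x] <+ l.map f := fun h => by
      simpa using h.map f
    rcases h.realize x hx y hy hxy hyx with h | h | h
    · exact Or.inl (by simpa using hmap h)
    · exact Or.inr (Or.inl (by simpa using hmap h))
    · exact Or.inr (Or.inr (hmap h))

theorem dual (h : IsRootedRealizer S u xa xp ya yp z) :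
    IsRootedRealizer (ofDual ⁻¹' S) (toDual u) (yp.reverse.map toDual) (ya.reverse.map toDual)
      (xp.reverse.map toDual) (xa.reverse.map toDual) (z.reverse.map toDual) where
  linExt_x := by simpa using h.linExt_y.dual
  linExt_y := by simpa using h.linExt_x.dual
  linExt_z := h.linExt_z.dual
  mem_xp w := by obtain ⟨w, rfl⟩ := toDual.surjective w; simp [h.mem_ya]
  mem_ya w := by obtain ⟨w, rfl⟩ := toDual.surjective w; simp [h.mem_xp]
  head_z hmin := by simp [h.getLast_z fun c hc => hmin (toDual c) hc]
  getLast_z hmax := by simp [h.head_z fun c hc => hmax (toDual c) hc]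
  realize x hx y hy hxy hyx := by
    have hrev : ∀ {l : List α}, [ofDual x, ofDual y] <+ l → [y, x] <+ l.reverse.map toDual :=
      fun h => by simpa using h.reverse.map toDual
    rcases h.realize (ofDual y) hy (ofDual x) hx hxy hyx with h | h | h
    · exact Or.inr (Or.inl (by simpa using hrev h))
    · exact Or.inl (by simpa using hrev h)
    · exact Or.inr (Or.inr (hrev h))

section Upper

variable (hS : IsRootedRealizer S u xa xp ya yp z) (hC : IsRootedRealizer C b xa' xp' ya' yp' z')
  (hsep : Separates u S C) (hup : ∀ y ∈ C, (u < y ↔ b ≤ y) ∧ ¬ y < u)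
include hsep hup

theorem not_le_of_separates_of_upper : ∀ x ∈ S, ∀ y ∈ C, ¬ y ≤ x := by
  intro x hx y hy hyx
  obtain ⟨hne, -, hlt⟩ := hsep x hx y hy
  rcases hyx.lt_or_eq with h | h
  exacts [(hup y hy).2 (hlt h).1, hne h.symm]

include hS hC

theorem linExt_x_union_upper :
    IsLinExtList (S ∪ C) (xa' ++ xa ++ u :: (xp ++ b :: xp')) := by
  have hCS := not_le_of_separates_of_upper hsep hup
  rw [show xa' ++ xa ++ u :: (xp ++ b :: xp') = xa' ++ (xa ++ u :: xp) ++ b :: xp' by simp,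
    Set.union_comm]
  refine hC.linExt_x.append_middle hS.linExt_x (fun a ha s hs hsa => ?_)
    fun s hs c hc => hCS s (hS.linExt_x.mem hs) c (hC.linExt_x.mem (by simp [hc]))
  obtain ⟨haC, hba⟩ := (hC.mem_xa a).1 ha
  rcases hsa.lt_or_eq with hlt | rfl
  · exact hba ((hup a haC).1.1 ((hsep s (hS.linExt_x.mem hs) a haC).2.1 hlt).2)
  · exact hCS _ (hS.linExt_x.mem hs) _ haC le_rfl

theorem linExt_y_union_upper :
    IsLinExtList (S ∪ C) (ya ++ u :: (ya' ++ b :: yp' ++ yp)) := by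
  have hCS := not_le_of_separates_of_upper hsep hup
  have hY : ya ++ u :: yp = ya ++ [u] ++ yp := by simp
  rw [show ya ++ u :: (ya' ++ b :: yp' ++ yp) = ya ++ [u] ++ (ya' ++ b :: yp') ++ yp by simp]
  refine (hY ▸ hS.linExt_y).append_middle hC.linExt_y
    (fun s hs c hc => hCS s (hS.linExt_y.mem (hY ▸ List.mem_append_left _ hs)) c
      (hC.linExt_y.mem hc)) fun c hc s hs hsc => ?_
  obtain ⟨hsS, hsu⟩ := (hS.mem_yp s).1 hs
  rcases hsc.lt_or_eq with hlt | rfl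
  · exact hsu ((hsep s hsS c (hC.linExt_y.mem hc)).2.1 hlt).1
  · exact hCS _ hsS _ (hC.linExt_y.mem hc) le_rfl

omit hsep in
theorem pair_sublist_union_upper {s c : α} (hs : s ∈ S) (hc : c ∈ C) (hsc : ¬ s ≤ c) :
    [c, s] <+ xa' ++ xa ++ u :: (xp ++ b :: xp') ∨
      [c, s] <+ ya ++ u :: (ya' ++ b :: yp' ++ yp) := by
  by_cases huc : u < c
  · have hs' : s ∈ yp := (hS.mem_yp s).2 ⟨hs, fun hsu => hsc (hsu.trans huc.le)⟩
    have := (List.pair_sublist_append ((hC.linExt_y.1 c).2 hc) hs').trans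
      (List.sublist_append_right (ya ++ [u]) _)
    exact Or.inr (by simpa using this)
  · have hc' : c ∈ xa' := (hC.mem_xa c).2 ⟨hc, fun hbc => huc ((hup c hc).1.2 hbc)⟩
    have := (List.pair_sublist_append hc' ((hS.linExt_x.1 s).2 hs)).trans
      (List.sublist_append_left _ (b :: xp'))
    exact Or.inl (by simpa using this)

omit hsep in
theorem realize_union_upper : ∀ x ∈ S ∪ C, ∀ y ∈ S ∪ C, ¬ x ≤ y → ¬ y ≤ x →
    [y, x] <+ xa' ++ xa ++ u :: (xp ++ b :: xp') ∨
      [y, x] <+ ya ++ u :: (ya' ++ b :: yp' ++ yp) ∨ [y, x] <+ z ++ z' := by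
  have hX : xa' ++ xa ++ u :: (xp ++ b :: xp') = xa' ++ (xa ++ u :: xp) ++ b :: xp' := by
    simp
  have hY : ya ++ u :: (ya' ++ b :: yp' ++ yp) = ya ++ [u] ++ (ya' ++ b :: yp') ++ yp := by
    simp
  have hY₀ : ya ++ u :: yp = ya ++ [u] ++ yp := by simp
  rintro x (hx | hx) y (hy | hy) hxy hyx
  · rcases hS.realize x hx y hy hxy hyx with h | h | h
    · exact Or.inl (hX ▸ h.trans ((List.sublist_append_right _ _).trans
        (List.sublist_append_left _ _)))
    · exact Or.inr (Or.inl (hY ▸ h.trans (hY₀ ▸ (List.sublist_append_left _ _).append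
        (List.Sublist.refl _))))
    · exact Or.inr (Or.inr (h.trans (List.sublist_append_left _ _)))
  · exact (pair_sublist_union_upper hS hC hup hx hy hxy).imp_right Or.inl
  · exact Or.inr (Or.inr (List.pair_sublist_append ((hS.linExt_z.1 y).2 hy)
      ((hC.linExt_z.1 x).2 hx)))
  · rcases hC.realize x hx y hy hxy hyx with h | h | h
    · exact Or.inl (hX ▸ h.trans ((List.sublist_append_left _ _).append
        (List.Sublist.refl _)))
    · exact Or.inr (Or.inl (hY ▸ h.trans ((List.sublist_append_right _ _).trans
        (List.sublist_append_left _ _))))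
    · exact Or.inr (Or.inr (h.trans (List.sublist_append_right _ _)))

theorem union_upper :
    IsRootedRealizer (S ∪ C) u (xa' ++ xa) (xp ++ b :: xp') ya (ya' ++ b :: yp' ++ yp)
      (z ++ z') := by
  have hCS := not_le_of_separates_of_upper hsep hup
  have hb : b ∈ C := hC.root_mem
  refine ⟨linExt_x_union_upper hS hC hsep hup, linExt_y_union_upper hS hC hsep hup, ?_,
    fun w => ?_, fun w => ?_, fun hmin => ?_, fun hmax => ?_, realize_union_upper hS hC hup⟩
  · simpa using (show IsLinExtList S (z ++ []) by simpa using hS.linExt_z).append_middle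
      hC.linExt_z (fun s hs c hc => hCS s (hS.linExt_z.mem hs) c (hC.linExt_z.mem hc)) (by simp)
  · simp only [List.mem_append, List.mem_cons, hS.mem_xp, hC.mem_xp, Set.mem_union]
    constructor
    · rintro (⟨hw, hu⟩ | rfl | ⟨hw, hbw⟩)
      exacts [⟨Or.inl hw, hu⟩, ⟨Or.inr hb, (hup w hb).1.2 le_rfl⟩,
        ⟨Or.inr hw, (hup w hw).1.2 hbw.le⟩]
    · rintro ⟨hw | hw, hu⟩
      · exact Or.inl ⟨hw, hu⟩
      · rcases ((hup w hw).1.1 hu).eq_or_lt with rfl | hbw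
        exacts [Or.inr (Or.inl rfl), Or.inr (Or.inr ⟨hw, hbw⟩)]
  · simp only [hS.mem_ya, Set.mem_union]
    grind
  · simp [List.head?_append, hS.head_z fun c hc => hmin c (Or.inl hc)]
  · exact absurd ((hup b hb).1.2 le_rfl) (hmax b (Or.inr hb))

end Upper

theorem isListRealizer [DecidableEq α] (h : IsRootedRealizer Set.univ u xa xp ya yp z) :
    IsListRealizer [xa ++ u :: xp, ya ++ u :: yp, z] := by
  have hlin : ∀ l ∈ [xa ++ u :: xp, ya ++ u :: yp, z], IsLinExtList Set.univ l := by
    simp [h.linExt_x, h.linExt_y, h.linExt_z]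
  refine ⟨fun l hl => ⟨(hlin l hl).nodup, fun a => ((hlin l hl).1 a).2 trivial⟩,
    fun l hl a b => (hlin l hl).listLE_of_le trivial trivial, fun a b hab => ?_⟩
  by_contra hnab
  by_cases hba : b ≤ a
  · exact (h.linExt_x.idxOf_lt_idxOf trivial trivial (lt_of_le_not_ge hba hnab)).not_ge
      (hab _ (by simp))
  · rcases h.realize a trivial b trivial hnab hba with h' | h' | h'
    · exact h.linExt_x.not_listLE h' (hab _ (by simp))
    · exact h.linExt_y.not_listLE h' (hab _ (by simp))
    · exact h.linExt_z.not_listLE h' (hab _ (by simp))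

end IsRootedRealizer

namespace HasRootedRealizer

variable {S C : Set α} {u b : α}

theorem map (h : HasRootedRealizer S u) (f : α ↪o β) : HasRootedRealizer (f '' S) (f u) :=
  let ⟨_, _, _, _, _, h⟩ := h
  ⟨_, _, _, _, _, h.map f⟩

theorem dual (h : HasRootedRealizer S u) : HasRootedRealizer (ofDual ⁻¹' S) (toDual u) :=
  let ⟨_, _, _, _, _, h⟩ := h
  ⟨_, _, _, _, _, h.dual⟩

theorem of_dual (h : HasRootedRealizer (ofDual ⁻¹' S) (toDual u)) : HasRootedRealizer S u :=
  h.dual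

theorem union_upper (hS : HasRootedRealizer S u) (hC : HasRootedRealizer C b)
    (hsep : Separates u S C) (hup : ∀ y ∈ C, (u < y ↔ b ≤ y) ∧ ¬ y < u) :
    HasRootedRealizer (S ∪ C) u :=
  let ⟨_, _, _, _, _, hS⟩ := hS
  let ⟨_, _, _, _, _, hC⟩ := hC
  ⟨_, _, _, _, _, hS.union_upper hC hsep hup⟩

theorem union_lower (hS : HasRootedRealizer S u) (hC : HasRootedRealizer C b)
    (hsep : Separates u S C) (hdown : ∀ y ∈ C, (y < u ↔ y ≤ b) ∧ ¬ u < y) :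
    HasRootedRealizer (S ∪ C) u :=
  of_dual <| hS.dual.union_upper hC.dual hsep.dual hdown

end HasRootedRealizer

theorem coverGraph_eq_induce {S : Set α} (hS : S.OrdConnected) :
    coverGraph S = (coverGraph α).induce S := by
  have hcov : ∀ x y : S, x ⋖ y ↔ (x : α) ⋖ y := fun x y =>
    (Set.OrdConnected.apply_covBy_apply_iff (OrderEmbedding.subtype (· ∈ S))
      (by simpa using hS)).symm
  ext x y
  simp [coverGraph, hcov]

theorem exists_walk_of_reflTransGen {x y : α} (h : Relation.ReflTransGen (· ⋖ ·) x y) :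
    ∃ p : (coverGraph α).Walk x y, ∀ z ∈ p.support, x ≤ z ∧ z ≤ y := by
  induction h using Relation.ReflTransGen.head_induction_on with
  | refl => exact ⟨.nil, by simp⟩
  | @head x c hxc _ ih =>
    obtain ⟨p, hp⟩ := ih
    refine ⟨.cons (show (coverGraph α).Adj x c from Or.inl hxc) p, ?_⟩
    simp only [Walk.support_cons, List.mem_cons, forall_eq_or_imp]
    exact ⟨⟨le_rfl, hxc.le.trans (hp _ p.start_mem_support).2⟩,
      fun z hz => ⟨hxc.le.trans (hp z hz).1, (hp z hz).2⟩⟩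

section Branch

variable [LocallyFiniteOrder α] {u b b' c x y : α}

theorem mem_branch_of_covBy_of_le (hu : u ⋖ c) (hc : c ≤ y) :
    y ∈ (coverGraph α).branch u c := by
  obtain ⟨p, hp⟩ := exists_walk_of_reflTransGen (le_iff_reflTransGen_covBy.1 hc)
  exact ⟨p, fun h => (hp u h).1.not_gt hu.lt⟩

theorem mem_branch_of_le_of_covBy (hc : y ≤ c) (hu : c ⋖ u) :
    y ∈ (coverGraph α).branch u c := by
  obtain ⟨p, hp⟩ := exists_walk_of_reflTransGen (le_iff_reflTransGen_covBy.1 hc)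
  exact ⟨p.reverse, fun h => (hp u (by simpa using h)).2.not_gt hu.lt⟩

variable (hG : (coverGraph α).IsAcyclic)
include hG

theorem not_lt_and_lt_of_mem_branch (hb : (coverGraph α).Adj u b)
    (hx : x ∈ (coverGraph α).branch u b) (hy : y ∈ (coverGraph α).branch u b) :
    ¬ (x < u ∧ u < y) := by
  rintro ⟨hxu, huy⟩
  obtain ⟨c, hxc, hcu⟩ := exists_le_covBy_of_lt hxu
  obtain ⟨d, hud, hdy⟩ := exists_covBy_le_of_lt huy
  obtain rfl := hG.eq_of_mem_branch (Or.inr hcu) hb (mem_branch_of_le_of_covBy hxc hcu) hx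
  obtain rfl := hG.eq_of_mem_branch (Or.inl hud) hb (mem_branch_of_covBy_of_le hud hdy) hy
  exact hcu.lt.not_gt hud.lt

theorem ordConnected_branch (hb : (coverGraph α).Adj u b) :
    ((coverGraph α).branch u b).OrdConnected := by
  refine ⟨fun x hx y hy z ⟨hxz, hzy⟩ => ?_⟩
  obtain ⟨p, hp⟩ := exists_walk_of_reflTransGen (le_iff_reflTransGen_covBy.1 hxz)
  refine mem_branch_of_walk hx p fun hu => not_lt_and_lt_of_mem_branch hG hb hx hy ⟨?_, ?_⟩
  · exact (hp u hu).1.lt_of_ne (ne_of_mem_branch hx)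
  · exact ((hp u hu).2.trans hzy).lt_of_ne' (ne_of_mem_branch hy)

theorem lt_and_lt_of_mem_branch (hb : (coverGraph α).Adj u b) (hb' : (coverGraph α).Adj u b')
    (hne : b ≠ b') (hx : x ∈ (coverGraph α).branch u b) (hy : y ∈ (coverGraph α).branch u b')
    (hxy : x < y) : x < u ∧ u < y := by
  obtain ⟨p, hp⟩ := exists_walk_of_reflTransGen (le_iff_reflTransGen_covBy.1 hxy.le)
  by_cases hu : u ∈ p.support
  · exact ⟨(hp u hu).1.lt_of_ne (ne_of_mem_branch hx), (hp u hu).2.lt_of_ne' (ne_of_mem_branch hy)⟩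
  · exact absurd (hG.eq_of_mem_branch hb hb' (mem_branch_of_walk hx p hu) hy) hne

theorem upper_branch_lt_iff (hub : u ⋖ b) (hy : y ∈ (coverGraph α).branch u b) :
    (u < y ↔ b ≤ y) ∧ ¬ y < u := by
  refine ⟨⟨fun huy => ?_, fun hby => hub.lt.trans_le hby⟩, fun hyu => ?_⟩
  · obtain ⟨c, huc, hcy⟩ := exists_covBy_le_of_lt huy
    rwa [hG.eq_of_mem_branch (Or.inl hub) (Or.inl huc) hy (mem_branch_of_covBy_of_le huc hcy)]
  · obtain ⟨c, hyc, hcu⟩ := exists_le_covBy_of_lt hyu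
    obtain rfl := hG.eq_of_mem_branch (Or.inr hcu) (Or.inl hub)
      (mem_branch_of_le_of_covBy hyc hcu) hy
    exact hub.lt.not_gt hcu.lt

theorem lower_branch_lt_iff (hbu : b ⋖ u) (hy : y ∈ (coverGraph α).branch u b) :
    (y < u ↔ y ≤ b) ∧ ¬ u < y := by
  refine ⟨⟨fun hyu => ?_, fun hyb => hyb.trans_lt hbu.lt⟩, fun huy => ?_⟩
  · obtain ⟨c, hyc, hcu⟩ := exists_le_covBy_of_lt hyu
    rwa [hG.eq_of_mem_branch (Or.inr hbu) (Or.inr hcu) hy (mem_branch_of_le_of_covBy hyc hcu)]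
  · obtain ⟨c, huc, hcy⟩ := exists_covBy_le_of_lt huy
    obtain rfl := hG.eq_of_mem_branch (Or.inl huc) (Or.inr hbu)
      (mem_branch_of_covBy_of_le huc hcy) hy
    exact hbu.lt.not_gt huc.lt

theorem separates_insert_biUnion_branch {M : Set α} (hM : ∀ b' ∈ M, (coverGraph α).Adj u b')
    (hb : (coverGraph α).Adj u b) (hbM : b ∉ M) :
    Separates u (insert u (⋃ b' ∈ M, (coverGraph α).branch u b'))
      ((coverGraph α).branch u b) := by
  intro x hx y hy
  simp only [Set.mem_insert_iff, Set.mem_iUnion] at hx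
  rcases hx with rfl | ⟨b', hb'M, hx⟩
  · exact ⟨(ne_of_mem_branch hy).symm, fun h => ⟨le_rfl, h⟩, fun h => ⟨h, le_rfl⟩⟩
  · have hne : b' ≠ b := fun h => hbM (h ▸ hb'M)
    have hb' := hM b' hb'M
    exact ⟨fun hxy => hne (hG.eq_of_mem_branch hb' hb hx (hxy ▸ hy)),
      fun h => (lt_and_lt_of_mem_branch hG hb' hb hne hx hy h).imp_left le_of_lt,
      fun h => (lt_and_lt_of_mem_branch hG hb hb' hne.symm hy hx h).imp_right le_of_lt⟩

theorem hasRootedRealizer_insert_biUnion (u : α) (M : Finset α)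
    (hM : ∀ b ∈ M, (coverGraph α).Adj u b)
    (hC : ∀ b ∈ M, HasRootedRealizer ((coverGraph α).branch u b) b) :
    HasRootedRealizer (insert u (⋃ b ∈ M, (coverGraph α).branch u b)) u := by
  classical
  induction M using Finset.induction_on with
  | empty => simpa using (show HasRootedRealizer {u} u from ⟨_, _, _, _, _, .singleton u⟩)
  | insert b M hbM ih =>
    have hS := ih (fun b' hb' => hM b' (Finset.mem_insert_of_mem hb'))
      fun b' hb' => hC b' (Finset.mem_insert_of_mem hb')
    have hsep := separates_insert_biUnion_branch hG (M := M)
      (fun b' hb' => hM b' (Finset.mem_insert_of_mem hb')) (hM b (M.mem_insert_self b)) hbM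
    have hset : insert u (⋃ b' ∈ insert b M, (coverGraph α).branch u b') =
        insert u (⋃ b' ∈ M, (coverGraph α).branch u b') ∪ (coverGraph α).branch u b := by
      ext
      simp only [Finset.mem_insert, Set.mem_insert_iff, Set.mem_iUnion, Set.mem_union]
      grind
    rw [hset]
    rcases hM b (M.mem_insert_self b) with hub | hbu
    · exact hS.union_upper (hC b (M.mem_insert_self b)) hsep
        fun y hy => upper_branch_lt_iff hG hub hy
    · exact hS.union_lower (hC b (M.mem_insert_self b)) hsep
        fun y hy => lower_branch_lt_iff hG hbu hy

end Branch

theorem hasRootedRealizer_univ [Finite α] (hT : (coverGraph α).IsTree) (u : α) :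
    HasRootedRealizer (Set.univ : Set α) u := by
  induction h : Nat.card α using Nat.strong_induction_on generalizing α with
  | _ n ih =>
  classical
  have := Fintype.ofFinite α
  let : LocallyFiniteOrder α := Fintype.toLocallyFiniteOrder
  have hbranch : ∀ b, (coverGraph α).Adj u b →
      HasRootedRealizer ((coverGraph α).branch u b) b := by
    intro b hb
    have hcard : Nat.card ((coverGraph α).branch u b) < n :=
      h ▸ Finite.card_subtype_lt fun hu => ne_of_mem_branch hu rfl
    have htree : (coverGraph ((coverGraph α).branch u b)).IsTree := by
      rw [coverGraph_eq_induce (ordConnected_branch hT.isAcyclic hb)]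
      exact ⟨induce_branch_connected hb.ne', hT.isAcyclic.induce _⟩
    simpa using (ih _ hcard htree ⟨b, mem_branch_self hb.ne'⟩ rfl).map (OrderEmbedding.subtype _)
  convert hasRootedRealizer_insert_biUnion hT.isAcyclic u
    (Finset.univ.filter ((coverGraph α).Adj u)) (by simp) (by simpa using hbranch) using 1
  refine (Set.eq_univ_of_forall fun w => ?_).symm
  by_cases hw : w = u
  · exact Or.inl hw
  · obtain ⟨b, hb, hwb⟩ := hT.connected.exists_mem_branch hw
    exact Or.inr (Set.mem_biUnion (by simpa using hb) hwb)

end TreePoset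

open TreePoset in
/-- a finite tree poset with a minimal element `a` has a realizer
of size `3` of the form `U⁻ a U⁺`, `a U₁`, `a U₂`, where `U⁻` enumerates the
elements incomparable to `a`, `U⁺` enumerates the elements above `a`, and
`U₁, U₂` enumerate all elements other than `a`. -/
theorem tree_minimal_realizer {α : Type*} [PartialOrder α] [Fintype α] [DecidableEq α]
    (ht : (coverGraph α).IsTree) (a : α) (ha : ∀ b : α, ¬ b < a) :
    ∃ um up u1 u2 : List α,
      (∀ w : α, w ∈ um ↔ w ≠ a ∧ ¬ a < w) ∧
      (∀ w : α, w ∈ up ↔ a < w) ∧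
      (∀ w : α, w ∈ u1 ↔ w ≠ a) ∧
      (∀ w : α, w ∈ u2 ↔ w ≠ a) ∧
      IsListRealizer [um ++ a :: up, a :: u1, a :: u2] := by
  obtain ⟨xa, xp, ya, yp, z, h⟩ := hasRootedRealizer_univ ht a
  have hya : ya = [] := List.eq_nil_iff_forall_not_mem.2 fun w hw => ha w ((h.mem_ya w).1 hw).2
  obtain ⟨zp, rfl⟩ := List.head?_eq_some_iff.1 (h.head_z fun c _ => ha c)
  refine ⟨xa, xp, yp, zp, fun w => ?_, fun w => by simp [h.mem_xp], fun w => ?_, fun w => ?_,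
    by simpa [hya] using h.isListRealizer⟩
  · simp [h.mem_xa, le_iff_eq_or_lt, eq_comm]
  · simp [h.mem_yp, le_iff_eq_or_lt, ha]
  · have hnd := h.linExt_z.nodup
    have hmem := h.linExt_z.1 w
    simp only [List.nodup_cons, List.mem_cons] at hnd hmem
    grind
end

section
/- Every finite poset whose cover graph is a tree has order dimension at most 3. -/
/-!
Induction on the size of the poset, with a stronger invariant: for every root `r` there is a
realizer `L₁, L₂, L₃` in which the down-set of `r` is an initial segment of `L₂` and the up-set of
`r` is a final segment of `L₃`.

Deleting a cover edge `v ⋖ w` of the tree splits the poset into the component `S` of `v` and the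
component `T` of `w`, and every comparability between the two sides passes through `v ≤ w`.
Realizers of `S` rooted at `v` and of `T` rooted at `w` are concatenated blockwise:
`L₁ = S, T`; `L₂ = S ∩ ↓v, T ∩ ↓w, T \ ↓w, S \ ↓v`; `L₃ = T \ ↑w, S \ ↑v, S ∩ ↑v, T ∩ ↑w`,
each block ordered as in the corresponding extension of `S` or `T`. The result is rooted at both
`v` and `w`, so any edge at a given root does the job.

Linear extensions are encoded as injective monotone keys in `ℚ`; the blockwise concatenation is a
lexicographic key in `ℕ ×ₗ ℚ`, which is brought back to `ℚ` through an order embedding.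
-/

section Keys

variable {α β : Type*} [PartialOrder α] [LinearOrder β]

def IsLinExtKey (g : α → β) : Prop :=
  Monotone g ∧ Function.Injective g

lemma IsLinExtKey.isLinExt {g : α → β} (hg : IsLinExtKey g) :
    IsLinExt (fun a b => g a ≤ g b) :=
  ⟨{ refl := fun _ => le_rfl
     trans := fun _ _ _ => le_trans
     antisymm := fun _ _ h₁ h₂ => hg.2 (le_antisymm h₁ h₂)
     total := fun _ _ => le_total _ _ }, fun _ _ h => hg.1 h⟩

lemma orderDim_le_of_linExtKeys {k : ℕ} (g : Fin k → α → β) (hg : ∀ i, IsLinExtKey (g i))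
    (hle : ∀ x y, (∀ i, g i x ≤ g i y) → x ≤ y) : orderDim α ≤ k :=
  Nat.sInf_le ⟨fun i a b => g i a ≤ g i b, fun i => (hg i).isLinExt,
    fun a b => ⟨fun h i => (hg i).1 h, hle a b⟩⟩

end Keys

section Realizers

variable {α : Type*} [PartialOrder α]

structure IsKeyRealizer (g₁ g₂ g₃ : α → ℚ) : Prop where
  key₁ : IsLinExtKey g₁
  key₂ : IsLinExtKey g₂
  key₃ : IsLinExtKey g₃
  le_of_keys : ∀ x y, g₁ x ≤ g₁ y → g₂ x ≤ g₂ y → g₃ x ≤ g₃ y → x ≤ y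

structure IsRootedRealizer (r : α) (g₁ g₂ g₃ : α → ℚ) : Prop extends IsKeyRealizer g₁ g₂ g₃ where
  le_root_iff : ∀ x, g₂ x ≤ g₂ r ↔ x ≤ r
  root_le_iff : ∀ x, g₃ r ≤ g₃ x ↔ r ≤ x

lemma IsKeyRealizer.orderDim_le_three {g₁ g₂ g₃ : α → ℚ} (h : IsKeyRealizer g₁ g₂ g₃) :
    orderDim α ≤ 3 :=
  orderDim_le_of_linExtKeys ![g₁, g₂, g₃] (by simp [Fin.forall_fin_succ, h.key₁, h.key₂, h.key₃])
    fun x y hxy => h.le_of_keys x y (hxy 0) (hxy 1) (hxy 2)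

variable {r : α} {g₁ g₂ g₃ : α → ℚ}

lemma IsRootedRealizer.le_root_of_key_le (h : IsRootedRealizer r g₁ g₂ g₃) {x y : α}
    (hxy : g₂ x ≤ g₂ y) (hy : y ≤ r) : x ≤ r :=
  (h.le_root_iff x).1 (hxy.trans ((h.le_root_iff y).2 hy))

lemma IsRootedRealizer.root_le_of_key_le (h : IsRootedRealizer r g₁ g₂ g₃) {x y : α}
    (hxy : g₃ x ≤ g₃ y) (hx : r ≤ x) : r ≤ y :=
  (h.root_le_iff y).1 (((h.root_le_iff x).2 hx).trans hxy)

lemma isRootedRealizer_of_subsingleton [Subsingleton α] (r : α) :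
    IsRootedRealizer r (fun _ => 0) (fun _ => 0) (fun _ => 0) where
  key₁ := ⟨monotone_const, Function.injective_of_subsingleton _⟩
  key₂ := ⟨monotone_const, Function.injective_of_subsingleton _⟩
  key₃ := ⟨monotone_const, Function.injective_of_subsingleton _⟩
  le_of_keys x y _ _ _ := (Subsingleton.elim x y).le
  le_root_iff x := by simp [Subsingleton.elim x r]
  root_le_iff x := by simp [Subsingleton.elim x r]

end Realizers

section Glue

noncomputable def lexKey : ℕ ×ₗ ℚ ↪o ℚ :=
  have : Countable (ℕ ×ₗ ℚ) := inferInstanceAs (Countable (ℕ × ℚ))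
  (Order.embedding_from_countable_to_dense (ℕ ×ₗ ℚ) ℚ).some

lemma lexKey_le_lexKey_iff_of_imp {k l : ℕ} {p q : ℚ} (hpq : p ≤ q → k ≤ l) (hqp : q ≤ p → l ≤ k) :
    lexKey (toLex (k, p)) ≤ lexKey (toLex (l, q)) ↔ p ≤ q := by
  rw [lexKey.le_iff_le, Prod.Lex.toLex_le_toLex]
  constructor
  · rintro (hkl | ⟨-, hpq⟩)
    · exact le_of_lt (not_le.1 fun hqp' => (hqp hqp').not_gt hkl)
    · exact hpq
  · intro h
    rcases (hpq h).lt_or_eq with hkl | hkl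
    · exact .inl hkl
    · exact .inr ⟨hkl, h⟩

variable {α : Type*}

open Classical in
noncomputable def glueKey (S : Set α) (blk : α → ℕ) (a : S → ℚ) (b : ↥Sᶜ → ℚ) (x : α) : ℚ :=
  lexKey (toLex (blk x, if h : x ∈ S then a ⟨x, h⟩ else b ⟨x, h⟩))

variable {S : Set α} {blk : α → ℕ} {a : S → ℚ} {b : ↥Sᶜ → ℚ} {x y : α}

lemma glueKey_lt_glueKey (h : blk x < blk y) : glueKey S blk a b x < glueKey S blk a b y :=
  lexKey.lt_iff_lt.2 (Prod.Lex.toLex_lt_toLex.2 (.inl h))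

lemma block_le_of_glueKey_le (h : glueKey S blk a b x ≤ glueKey S blk a b y) : blk x ≤ blk y :=
  not_lt.1 fun hyx => (glueKey_lt_glueKey hyx).not_ge h

lemma glueKey_le_glueKey_iff_of_ne (h : blk x ≠ blk y) :
    glueKey S blk a b x ≤ glueKey S blk a b y ↔ blk x < blk y :=
  ⟨fun hle => (block_le_of_glueKey_le hle).lt_of_ne h, fun hlt => (glueKey_lt_glueKey hlt).le⟩

lemma glueKey_le_glueKey_iff_of_mem (hblk : ∀ x y : S, a x ≤ a y → blk x ≤ blk y) (x y : S) :
    glueKey S blk a b x ≤ glueKey S blk a b y ↔ a x ≤ a y := by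
  simp only [glueKey, dif_pos x.2, dif_pos y.2]
  exact lexKey_le_lexKey_iff_of_imp (hblk x y) (hblk y x)

lemma glueKey_le_glueKey_iff_of_notMem (hblk : ∀ x y : ↥Sᶜ, b x ≤ b y → blk x ≤ blk y)
    (x y : ↥Sᶜ) : glueKey S blk a b x ≤ glueKey S blk a b y ↔ b x ≤ b y := by
  simp only [glueKey, dif_neg x.2, dif_neg y.2]
  exact lexKey_le_lexKey_iff_of_imp (hblk x y) (hblk y x)

lemma isLinExtKey_glueKey [PartialOrder α] (ha : IsLinExtKey a) (hb : IsLinExtKey b)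
    (hblkS : ∀ x y : S, a x ≤ a y → blk x ≤ blk y)
    (hblkT : ∀ x y : ↥Sᶜ, b x ≤ b y → blk x ≤ blk y)
    (hsep : ∀ x ∈ S, ∀ y ∉ S, blk x ≠ blk y) (hcross : ∀ x ∈ S, ∀ y ∉ S, x ≤ y → blk x < blk y)
    (hback : ∀ x ∉ S, ∀ y ∈ S, ¬ x ≤ y) : IsLinExtKey (glueKey S blk a b) := by
  have iffS := glueKey_le_glueKey_iff_of_mem (b := b) hblkS
  have iffT := glueKey_le_glueKey_iff_of_notMem (a := a) hblkT
  constructor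
  · intro x y hxy
    by_cases hx : x ∈ S <;> by_cases hy : y ∈ S
    · exact (iffS ⟨x, hx⟩ ⟨y, hy⟩).2 (ha.1 hxy)
    · exact (glueKey_lt_glueKey (hcross x hx y hy hxy)).le
    · exact absurd hxy (hback x hx y hy)
    · exact (iffT ⟨x, hx⟩ ⟨y, hy⟩).2 (hb.1 hxy)
  · intro x y hxy
    have hblk : blk x = blk y :=
      le_antisymm (block_le_of_glueKey_le hxy.le) (block_le_of_glueKey_le hxy.ge)
    by_cases hx : x ∈ S <;> by_cases hy : y ∈ S
    · exact congrArg Subtype.val <| ha.2 <|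
        le_antisymm ((iffS ⟨x, hx⟩ ⟨y, hy⟩).1 hxy.le) ((iffS ⟨y, hy⟩ ⟨x, hx⟩).1 hxy.ge)
    · exact absurd hblk (hsep x hx y hy)
    · exact absurd hblk.symm (hsep y hy x hx)
    · exact congrArg Subtype.val <| hb.2 <|
        le_antisymm ((iffT ⟨x, hx⟩ ⟨y, hy⟩).1 hxy.le) ((iffT ⟨y, hy⟩ ⟨x, hx⟩).1 hxy.ge)

end Glue

section Split

variable {α : Type*} [PartialOrder α]

structure IsSplitAt (S : Set α) (v w : α) : Prop where
  mem : v ∈ S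
  notMem : w ∉ S
  le : v ≤ w
  mem_le_notMem : ∀ x ∈ S, ∀ y ∉ S, x ≤ y → x ≤ v ∧ w ≤ y
  not_notMem_le_mem : ∀ x ∉ S, ∀ y ∈ S, ¬ x ≤ y

open Classical in
noncomputable def sideBlock (S : Set α) (x : α) : ℕ :=
  if x ∈ S then 0 else 1

open Classical in
noncomputable def downBlock (S : Set α) (v w x : α) : ℕ :=
  if x ∈ S then (if x ≤ v then 0 else 3) else (if x ≤ w then 1 else 2)

open Classical in
noncomputable def upBlock (S : Set α) (v w x : α) : ℕ :=
  if x ∈ S then (if v ≤ x then 2 else 1) else (if w ≤ x then 3 else 0)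

variable {S : Set α} {v w : α} {hv : v ∈ S} {hw : w ∉ S} {a₁ a₂ a₃ : S → ℚ}
  {b₁ b₂ b₃ : ↥Sᶜ → ℚ}

lemma IsRootedRealizer.downBlock_le_downBlock_of_mem (hA : IsRootedRealizer ⟨v, hv⟩ a₁ a₂ a₃)
    {x y : S} (hxy : a₂ x ≤ a₂ y) : downBlock S v w x ≤ downBlock S v w y := by
  simp only [downBlock, x.2, y.2, if_true]
  by_cases hy : (y : α) ≤ v
  · simp [hy, show (x : α) ≤ v from hA.le_root_of_key_le hxy hy]
  · split_ifs <;> omega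

lemma IsRootedRealizer.downBlock_le_downBlock_of_notMem
    (hB : IsRootedRealizer ⟨w, hw⟩ b₁ b₂ b₃) {x y : ↥Sᶜ} (hxy : b₂ x ≤ b₂ y) :
    downBlock S v w x ≤ downBlock S v w y := by
  simp only [downBlock, show (x : α) ∉ S from x.2, show (y : α) ∉ S from y.2, if_false]
  by_cases hy : (y : α) ≤ w
  · simp [hy, show (x : α) ≤ w from hB.le_root_of_key_le hxy hy]
  · split_ifs <;> omega

lemma IsRootedRealizer.upBlock_le_upBlock_of_mem (hA : IsRootedRealizer ⟨v, hv⟩ a₁ a₂ a₃)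
    {x y : S} (hxy : a₃ x ≤ a₃ y) : upBlock S v w x ≤ upBlock S v w y := by
  simp only [upBlock, x.2, y.2, if_true]
  by_cases hx : v ≤ (x : α)
  · simp [hx, show v ≤ (y : α) from hA.root_le_of_key_le hxy hx]
  · split_ifs <;> omega

lemma IsRootedRealizer.upBlock_le_upBlock_of_notMem (hB : IsRootedRealizer ⟨w, hw⟩ b₁ b₂ b₃)
    {x y : ↥Sᶜ} (hxy : b₃ x ≤ b₃ y) : upBlock S v w x ≤ upBlock S v w y := by
  simp only [upBlock, show (x : α) ∉ S from x.2, show (y : α) ∉ S from y.2, if_false]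
  by_cases hx : w ≤ (x : α)
  · simp [hx, show w ≤ (y : α) from hB.root_le_of_key_le hxy hx]
  · split_ifs <;> omega

lemma IsSplitAt.isLinExtKey_down (hS : IsSplitAt S v w)
    (hA : IsRootedRealizer ⟨v, hS.mem⟩ a₁ a₂ a₃) (hB : IsRootedRealizer ⟨w, hS.notMem⟩ b₁ b₂ b₃) :
    IsLinExtKey (glueKey S (downBlock S v w) a₂ b₂) := by
  refine isLinExtKey_glueKey hA.key₂ hB.key₂ (fun _ _ => hA.downBlock_le_downBlock_of_mem)
    (fun _ _ => hB.downBlock_le_downBlock_of_notMem) (fun x hx y hy => ?_)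
    (fun x hx y hy hxy => ?_) hS.not_notMem_le_mem
  · simp only [downBlock, hx, hy, if_true, if_false]
    split_ifs <;> omega
  · simp only [downBlock, hx, hy, (hS.mem_le_notMem x hx y hy hxy).1, if_true, if_false]
    split_ifs <;> omega

lemma IsSplitAt.isLinExtKey_up (hS : IsSplitAt S v w)
    (hA : IsRootedRealizer ⟨v, hS.mem⟩ a₁ a₂ a₃) (hB : IsRootedRealizer ⟨w, hS.notMem⟩ b₁ b₂ b₃) :
    IsLinExtKey (glueKey S (upBlock S v w) a₃ b₃) := by
  refine isLinExtKey_glueKey hA.key₃ hB.key₃ (fun _ _ => hA.upBlock_le_upBlock_of_mem)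
    (fun _ _ => hB.upBlock_le_upBlock_of_notMem) (fun x hx y hy => ?_)
    (fun x hx y hy hxy => ?_) hS.not_notMem_le_mem
  · simp only [upBlock, hx, hy, if_true, if_false]
    split_ifs <;> omega
  · simp only [upBlock, hx, hy, (hS.mem_le_notMem x hx y hy hxy).2, if_true, if_false]
    split_ifs <;> omega

lemma IsSplitAt.le_of_glueKey_le (hS : IsSplitAt S v w)
    (hA : IsRootedRealizer ⟨v, hS.mem⟩ a₁ a₂ a₃) (hB : IsRootedRealizer ⟨w, hS.notMem⟩ b₁ b₂ b₃)
    {x y : α} (h₁ : glueKey S (sideBlock S) a₁ b₁ x ≤ glueKey S (sideBlock S) a₁ b₁ y)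
    (h₂ : glueKey S (downBlock S v w) a₂ b₂ x ≤ glueKey S (downBlock S v w) a₂ b₂ y)
    (h₃ : glueKey S (upBlock S v w) a₃ b₃ x ≤ glueKey S (upBlock S v w) a₃ b₃ y) : x ≤ y := by
  by_cases hx : x ∈ S <;> by_cases hy : y ∈ S
  · exact hA.le_of_keys ⟨x, hx⟩ ⟨y, hy⟩
      ((glueKey_le_glueKey_iff_of_mem (by simp [sideBlock]) ⟨x, hx⟩ ⟨y, hy⟩).1 h₁)
      ((glueKey_le_glueKey_iff_of_mem (fun _ _ => hA.downBlock_le_downBlock_of_mem)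
        ⟨x, hx⟩ ⟨y, hy⟩).1 h₂)
      ((glueKey_le_glueKey_iff_of_mem (fun _ _ => hA.upBlock_le_upBlock_of_mem)
        ⟨x, hx⟩ ⟨y, hy⟩).1 h₃)
  · have hxv : x ≤ v := by
      by_contra hxv
      have := block_le_of_glueKey_le h₂
      simp only [downBlock, hx, hy, hxv, if_true, if_false] at this
      split_ifs at this <;> omega
    have hwy : w ≤ y := by
      by_contra hwy
      have := block_le_of_glueKey_le h₃
      simp only [upBlock, hx, hy, hwy, if_true, if_false] at this
      split_ifs at this <;> omega
    exact hxv.trans (hS.le.trans hwy)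
  · simpa [sideBlock, hx, hy] using block_le_of_glueKey_le h₁
  · exact hB.le_of_keys ⟨x, hx⟩ ⟨y, hy⟩
      ((glueKey_le_glueKey_iff_of_notMem (by simp +contextual [sideBlock]) ⟨x, hx⟩ ⟨y, hy⟩).1 h₁)
      ((glueKey_le_glueKey_iff_of_notMem (fun _ _ => hB.downBlock_le_downBlock_of_notMem)
        ⟨x, hx⟩ ⟨y, hy⟩).1 h₂)
      ((glueKey_le_glueKey_iff_of_notMem (fun _ _ => hB.upBlock_le_upBlock_of_notMem)
        ⟨x, hx⟩ ⟨y, hy⟩).1 h₃)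

lemma IsSplitAt.isKeyRealizer_glue (hS : IsSplitAt S v w)
    (hA : IsRootedRealizer ⟨v, hS.mem⟩ a₁ a₂ a₃) (hB : IsRootedRealizer ⟨w, hS.notMem⟩ b₁ b₂ b₃) :
    IsKeyRealizer (glueKey S (sideBlock S) a₁ b₁) (glueKey S (downBlock S v w) a₂ b₂)
      (glueKey S (upBlock S v w) a₃ b₃) where
  key₁ := isLinExtKey_glueKey hA.key₁ hB.key₁ (by simp [sideBlock])
    (by simp +contextual [sideBlock]) (by simp +contextual [sideBlock])
    (by simp +contextual [sideBlock]) hS.not_notMem_le_mem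
  key₂ := hS.isLinExtKey_down hA hB
  key₃ := hS.isLinExtKey_up hA hB
  le_of_keys _ _ := hS.le_of_glueKey_le hA hB

lemma IsSplitAt.isRootedRealizer_glue_left (hS : IsSplitAt S v w)
    (hA : IsRootedRealizer ⟨v, hS.mem⟩ a₁ a₂ a₃) (hB : IsRootedRealizer ⟨w, hS.notMem⟩ b₁ b₂ b₃) :
    IsRootedRealizer v (glueKey S (sideBlock S) a₁ b₁) (glueKey S (downBlock S v w) a₂ b₂)
      (glueKey S (upBlock S v w) a₃ b₃) where
  toIsKeyRealizer := hS.isKeyRealizer_glue hA hB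
  le_root_iff x := by
    by_cases hx : x ∈ S
    · exact (glueKey_le_glueKey_iff_of_mem (fun _ _ => hA.downBlock_le_downBlock_of_mem)
        ⟨x, hx⟩ ⟨v, hS.mem⟩).trans (hA.le_root_iff ⟨x, hx⟩)
    · refine iff_of_false (fun h => ?_) (hS.not_notMem_le_mem x hx v hS.mem)
      have := block_le_of_glueKey_le h
      simp only [downBlock, hx, hS.mem, le_rfl, if_true, if_false] at this
      split_ifs at this <;> omega
  root_le_iff x := by
    by_cases hx : x ∈ S
    · exact (glueKey_le_glueKey_iff_of_mem (fun _ _ => hA.upBlock_le_upBlock_of_mem)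
        ⟨v, hS.mem⟩ ⟨x, hx⟩).trans (hA.root_le_iff ⟨x, hx⟩)
    · have hvx : v ≤ x ↔ w ≤ x := ⟨fun h => (hS.mem_le_notMem v hS.mem x hx h).2, hS.le.trans⟩
      by_cases hwx : w ≤ x <;>
        simp [hvx, glueKey_le_glueKey_iff_of_ne, upBlock, hx, hS.mem, hwx]

lemma IsSplitAt.isRootedRealizer_glue_right (hS : IsSplitAt S v w)
    (hA : IsRootedRealizer ⟨v, hS.mem⟩ a₁ a₂ a₃) (hB : IsRootedRealizer ⟨w, hS.notMem⟩ b₁ b₂ b₃) :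
    IsRootedRealizer w (glueKey S (sideBlock S) a₁ b₁) (glueKey S (downBlock S v w) a₂ b₂)
      (glueKey S (upBlock S v w) a₃ b₃) where
  toIsKeyRealizer := hS.isKeyRealizer_glue hA hB
  le_root_iff x := by
    by_cases hx : x ∈ S
    · have hxw : x ≤ w ↔ x ≤ v :=
        ⟨fun h => (hS.mem_le_notMem x hx w hS.notMem h).1, fun h => h.trans hS.le⟩
      by_cases hxv : x ≤ v <;>
        simp [hxw, glueKey_le_glueKey_iff_of_ne, downBlock, hx, hS.notMem, hxv]
    · exact (glueKey_le_glueKey_iff_of_notMem (fun _ _ => hB.downBlock_le_downBlock_of_notMem)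
        ⟨x, hx⟩ ⟨w, hS.notMem⟩).trans (hB.le_root_iff ⟨x, hx⟩)
  root_le_iff x := by
    by_cases hx : x ∈ S
    · refine iff_of_false (fun h => ?_) (hS.not_notMem_le_mem w hS.notMem x hx)
      have := block_le_of_glueKey_le h
      simp only [upBlock, hx, hS.notMem, le_rfl, if_true, if_false] at this
      split_ifs at this <;> omega
    · exact (glueKey_le_glueKey_iff_of_notMem (fun _ _ => hB.upBlock_le_upBlock_of_notMem)
        ⟨w, hS.notMem⟩ ⟨x, hx⟩).trans (hB.root_le_iff ⟨x, hx⟩)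

end Split

lemma Relation.ReflTransGen.exists_crossing {α : Type*} {r : α → α → Prop} {p : α → Prop}
    {a b : α} (h : Relation.ReflTransGen r a b) (ha : p a) (hb : ¬ p b) :
    ∃ c d, Relation.ReflTransGen r a c ∧ r c d ∧ Relation.ReflTransGen r d b ∧ p c ∧ ¬ p d := by
  induction h with
  | refl => exact absurd ha hb
  | @tail c _ hac hcd ih =>
    by_cases hc : p c
    · exact ⟨_, _, hac, hcd, .refl, hc, hb⟩
    · obtain ⟨c', d', hac', hcd', hdc, hc', hd'⟩ := ih hc
      exact ⟨c', d', hac', hcd', hdc.tail hcd, hc', hd'⟩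

lemma SimpleGraph.Reachable.reachable_deleteEdges_or {V : Type*} {G : SimpleGraph V} {v w x : V}
    (h : G.Reachable x v) :
    (G.deleteEdges {s(v, w)}).Reachable x v ∨ (G.deleteEdges {s(v, w)}).Reachable x w := by
  set G' := G.deleteEdges {s(v, w)}
  suffices ∀ {x y} (p : G.Walk x y),
      G'.Reachable y v ∨ G'.Reachable y w → G'.Reachable x v ∨ G'.Reachable x w from
    this h.some (.inl .rfl)
  intro x y p
  induction p with
  | nil => exact id
  | @cons x z _ hxz _ ih =>
    intro hy
    by_cases he : s(x, z) = s(v, w)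
    · rcases Sym2.eq_iff.1 he with ⟨rfl, -⟩ | ⟨rfl, -⟩
      · exact .inl .rfl
      · exact .inr .rfl
    · have hadj : G'.Adj x z := by simp [G', hxz, he]
      exact (ih hy).imp hadj.reachable.trans hadj.reachable.trans

section Tree

variable {α : Type*} [PartialOrder α] {S : Set α} {v w : α}

lemma IsSplitAt.ordConnected (hS : IsSplitAt S v w) : S.OrdConnected :=
  ⟨fun _ _ y hy z hz => by_contra fun h => hS.not_notMem_le_mem z h y hy hz.2⟩

lemma IsSplitAt.ordConnected_compl (hS : IsSplitAt S v w) : Sᶜ.OrdConnected :=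
  ⟨fun x hx _ _ z hz h => hS.not_notMem_le_mem x hx z h hz.1⟩

lemma IsSplitAt.of_covBy [LocallyFiniteOrder α] (hvw : v ⋖ w) (hv : v ∈ S) (hw : w ∉ S)
    (hcut : ∀ c d, c ⋖ d → (c ∈ S ↔ d ∈ S) ∨ c = v ∧ d = w) : IsSplitAt S v w where
  mem := hv
  notMem := hw
  le := hvw.le
  mem_le_notMem x hx y hy hxy := by
    obtain ⟨c, d, hxc, hcd, hdy, hc, hd⟩ :=
      (le_iff_reflTransGen_covBy.1 hxy).exists_crossing hx hy
    obtain ⟨rfl, rfl⟩ := (hcut c d hcd).resolve_left (by tauto)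
    exact ⟨le_iff_reflTransGen_covBy.2 hxc, le_iff_reflTransGen_covBy.2 hdy⟩
  not_notMem_le_mem x hx y hy hxy := by
    obtain ⟨c, d, -, hcd, -, hc, hd⟩ :=
      (le_iff_reflTransGen_covBy.1 hxy).exists_crossing (p := (· ∉ S)) hx (not_not.2 hy)
    obtain ⟨rfl, -⟩ := (hcut c d hcd).resolve_left (by tauto)
    exact hc hv

lemma coverGraph_subtype (hS : S.OrdConnected) : coverGraph S = (coverGraph α).induce S := by
  have hcov (a b : S) : a ⋖ b ↔ (a : α) ⋖ b := by
    refine (Set.OrdConnected.apply_covBy_apply_iff (OrderEmbedding.subtype (· ∈ S)) ?_).symm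
    simpa using hS
  ext a b
  simp [coverGraph, hcov]

lemma SimpleGraph.IsTree.coverGraph_subtype (ht : (coverGraph α).IsTree) (hS : S.OrdConnected)
    (hconn : ((coverGraph α).induce S).Connected) : (coverGraph S).IsTree := by
  rw [_root_.coverGraph_subtype hS]
  exact ⟨hconn, ht.isAcyclic.induce S⟩

lemma SimpleGraph.IsTree.exists_isSplitAt [Finite α] (ht : (coverGraph α).IsTree)
    (hvw : v ⋖ w) :
    ∃ S : Set α, IsSplitAt S v w ∧ (coverGraph S).IsTree ∧ (coverGraph ↥Sᶜ).IsTree := by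
  classical
  have := Fintype.ofFinite α
  have := Fintype.toLocallyFiniteOrder (α := α)
  set G' := (coverGraph α).deleteEdges {s(v, w)}
  have hmem (x y : α) : x ∈ (G'.connectedComponentMk y).supp ↔ G'.Reachable x y := by
    simp [ConnectedComponent.mem_supp_iff, ConnectedComponent.eq]
  have hbridge : ¬ G'.Reachable v w :=
    isAcyclic_iff_forall_adj_isBridge.1 ht.isAcyclic (Or.inl hvw)
  have hconn (y : α) : ((coverGraph α).induce (G'.connectedComponentMk y).supp).Connected :=
    (G'.connectedComponentMk y).connected_toSimpleGraph.mono (comap_monotone _ (deleteEdges_le _))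
  set S := (G'.connectedComponentMk v).supp
  have hcompl : Sᶜ = (G'.connectedComponentMk w).supp := by
    ext x
    simp only [Set.mem_compl_iff, S, hmem]
    refine ⟨fun hx => ((ht.connected.preconnected x v).reachable_deleteEdges_or).resolve_left hx,
      fun hx hxv => hbridge (hxv.symm.trans hx)⟩
  have hS : IsSplitAt S v w := by
    refine .of_covBy hvw ((hmem v v).2 .rfl) (fun h => hbridge ((hmem w v).1 h).symm) ?_
    intro c d hcd
    by_cases he : s(c, d) = s(v, w)
    · rcases Sym2.eq_iff.1 he with ⟨rfl, rfl⟩ | ⟨rfl, rfl⟩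
      · exact .inr ⟨rfl, rfl⟩
      · exact absurd hcd.lt hvw.lt.not_gt
    · have hadj : G'.Adj c d := by simp [G', coverGraph, hcd, he]
      simp only [S, hmem]
      exact .inl ⟨hadj.symm.reachable.trans, hadj.reachable.trans⟩
  refine ⟨S, hS, ht.coverGraph_subtype hS.ordConnected (hconn v), ?_⟩
  exact ht.coverGraph_subtype hS.ordConnected_compl (hcompl ▸ hconn w)

end Tree

lemma SimpleGraph.Connected.subsingleton_of_forall_not_adj {V : Type*} {G : SimpleGraph V}
    (hG : G.Connected) {r : V} (hr : ∀ x, ¬ G.Adj r x) : Subsingleton V := by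
  have eq_r (x : V) : x = r := by
    obtain ⟨p⟩ := hG.preconnected r x
    cases p with
    | nil => rfl
    | cons h _ => exact absurd h (hr _)
  exact ⟨fun x y => (eq_r x).trans (eq_r y).symm⟩

theorem SimpleGraph.IsTree.exists_isRootedRealizer {α : Type*} [PartialOrder α] [Finite α]
    (ht : (coverGraph α).IsTree) (r : α) : ∃ g₁ g₂ g₃ : α → ℚ, IsRootedRealizer r g₁ g₂ g₃ := by
  induction h : Nat.card α using Nat.strong_induction_on generalizing α with
  | _ n ih =>
  have glue {v w : α} (hvw : v ⋖ w) :
      ∃ g₁ g₂ g₃ : α → ℚ, IsRootedRealizer v g₁ g₂ g₃ ∧ IsRootedRealizer w g₁ g₂ g₃ := by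
    obtain ⟨S, hS, hSt, hTt⟩ := ht.exists_isSplitAt hvw
    obtain ⟨a₁, a₂, a₃, hA⟩ :=
      ih _ (h ▸ Finite.card_subtype_lt hS.notMem) hSt ⟨v, hS.mem⟩ rfl
    obtain ⟨b₁, b₂, b₃, hB⟩ :=
      ih _ (h ▸ Finite.card_subtype_lt (not_not.2 hS.mem)) hTt ⟨w, hS.notMem⟩ rfl
    exact ⟨_, _, _, hS.isRootedRealizer_glue_left hA hB, hS.isRootedRealizer_glue_right hA hB⟩
  by_cases hr : ∃ x, (coverGraph α).Adj r x
  · obtain ⟨x, hrx | hxr⟩ := hr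
    · obtain ⟨g₁, g₂, g₃, hg, -⟩ := glue hrx
      exact ⟨g₁, g₂, g₃, hg⟩
    · obtain ⟨g₁, g₂, g₃, -, hg⟩ := glue hxr
      exact ⟨g₁, g₂, g₃, hg⟩
  · have := ht.connected.subsingleton_of_forall_not_adj (not_exists.1 hr)
    exact ⟨_, _, _, isRootedRealizer_of_subsingleton r⟩

/-- every finite tree poset has order dimension at most `3`. -/
theorem tree_dim_le_three {α : Type*} [PartialOrder α] [Fintype α]
    (ht : (coverGraph α).IsTree) : orderDim α ≤ 3 := by
  obtain ⟨r⟩ := ht.connected.nonempty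
  obtain ⟨g₁, g₂, g₃, hg⟩ := ht.exists_isRootedRealizer r
  exact hg.orderDim_le_three
end

section
/- Let P be the poset obtained by grafting rooted tree posets T_x, T_z (with roots r_x, r_z) onto the minimum x and maximum z of the square poset {x, a, b, z} (x < a < z, x < b < z, a incomparable to b), i.e., identifying r_x with x and r_z with z. Then P has order dimension at most 3. -/
/-
A finite poset whose cover graph is a tree has a realizer by three linear extensions in which,
for a prescribed root `r`, the down-set of `r` is an initial segment of the first and the up-set
of `r` is a final segment of the second (Trotter–Moore). Induct on the size: an edge `c ⋖ r` at the
root is a bridge of the cover graph, its two sides are convex subtrees, and their realizers (rooted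
at `c` and at `r`) are concatenated blockwise; an edge `r ⋖ c` is the same situation in the dual.
The grafted square is then realized by concatenating the realizers of `T x` and `T z` with `a` and
`b` in three orders, `a` and `b` being separated by the first two.

Linear extensions are handled as monotone, not necessarily injective, keys into `ℚ` (the block
keys in `ℕ ×ₗ ℚ` of the induction step embed into `ℚ`); ties are broken only at the end.
-/

theorem exists_linearOrder_realizer_of_keys {P α : Type*} [LinearOrder α] {n : ℕ}
    (R : P → P → Prop) (antisymm : ∀ p q, R p q → R q p → p = q) (F : Fin n → P → α)
    (hF : ∀ p q, R p q ↔ ∀ i, F i p ≤ F i q) :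
    ∃ L : Fin n → P → P → Prop,
      (∀ i, IsLinearOrder P (L i) ∧ ∀ p q, R p q → L i p q) ∧ (∀ p q, R p q ↔ ∀ i, L i p q) := by
  -- ties in `F i` are broken by the tuple of all keys, injective by antisymmetry
  let key (i : Fin n) (p : P) : α ×ₗ Lex (Fin n → α) := toLex (F i p, toLex fun j => F j p)
  have key_mono (i : Fin n) {p q : P} (h : R p q) : key i p ≤ key i q :=
    Prod.Lex.toLex_mono ⟨(hF p q).1 h i, Pi.toLex_monotone fun j => (hF p q).1 h j⟩
  have key_inj (i : Fin n) : Function.Injective (key i) := fun p q h => by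
    have h' : (fun j => F j p) = fun j => F j q := toLex_inj.1 (Prod.mk.inj (toLex_inj.1 h)).2
    exact antisymm p q ((hF p q).2 fun j => (congrFun h' j).le)
      ((hF q p).2 fun j => (congrFun h' j).ge)
  refine ⟨fun i p q => key i p ≤ key i q, fun i => ⟨?_, fun p q => key_mono i⟩,
    fun p q => ⟨fun h i => key_mono i h, fun h => (hF p q).2 fun i =>
      Prod.Lex.monotone_fst _ _ (h i)⟩⟩
  let := LinearOrder.lift' (key i) (key_inj i)
  exact inferInstanceAs (IsLinearOrder P (· ≤ ·))

lemma toLex_ite_le_toLex_ite_iff {γ α : Type*} [LinearOrder α] {P : γ → Prop} [DecidablePred P]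
    {k : γ → α} {m n : ℕ} (hmn : m < n) (hk : ∀ ⦃s t⦄, P s → ¬ P t → k s < k t) (s t : γ) :
    toLex (if P s then m else n, k s) ≤ toLex (if P t then m else n, k t) ↔ k s ≤ k t := by
  by_cases hs : P s <;> by_cases ht : P t
  · simp [hs, ht, Prod.Lex.toLex_le_toLex]
  · simp [hs, ht, Prod.Lex.toLex_le_toLex, hmn, (hk hs ht).le]
  · simp [hs, ht, Prod.Lex.toLex_le_toLex, hmn.ne', hmn.not_gt, (hk ht hs).not_ge]
  · simp [hs, ht, Prod.Lex.toLex_le_toLex]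

structure IsRootedRealizer_s18 {T α : Type*} [Preorder T] [LinearOrder α] (r : T) (f g h : T → α) :
    Prop where
  le_iff : ∀ u v, u ≤ v ↔ f u ≤ f v ∧ g u ≤ g v ∧ h u ≤ h v
  lt_of_le_root : ∀ ⦃u v⦄, u ≤ r → ¬ v ≤ r → f u < f v
  lt_of_root_le : ∀ ⦃u v⦄, ¬ r ≤ u → r ≤ v → g u < g v

namespace IsRootedRealizer_s18

variable {T α β : Type*} [Preorder T] [LinearOrder α] [LinearOrder β]

lemma of_subsingleton [Subsingleton T] (r : T) (k : T → α) : IsRootedRealizer_s18 r k k k where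
  le_iff u v := by simp [Subsingleton.elim u v]
  lt_of_le_root u v hu hv := absurd (Subsingleton.elim v r ▸ le_rfl) hv
  lt_of_root_le u v hu hv := absurd (Subsingleton.elim r u ▸ le_rfl) hu

lemma comp {r : T} {f g h : T → α} (hR : IsRootedRealizer_s18 r f g h) (e : α ↪o β) :
    IsRootedRealizer_s18 r (e ∘ f) (e ∘ g) (e ∘ h) where
  le_iff u v := by simpa using hR.le_iff u v
  lt_of_le_root u v hu hv := by simpa using hR.lt_of_le_root hu hv
  lt_of_root_le u v hu hv := by simpa using hR.lt_of_root_le hu hv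

lemma exists_rat [Countable α] {r : T} {f g h : T → α} (hR : IsRootedRealizer_s18 r f g h) :
    ∃ f g h : T → ℚ, IsRootedRealizer_s18 r f g h := by
  obtain ⟨e⟩ := Order.embedding_from_countable_to_dense (α := α) (β := ℚ)
  exact ⟨_, _, _, hR.comp e⟩

lemma ofDual {r : T} {f g h : Tᵒᵈ → α} (hR : IsRootedRealizer_s18 (OrderDual.toDual r) f g h) :
    IsRootedRealizer_s18 r (fun u => OrderDual.toDual (g (OrderDual.toDual u)))
      (fun u => OrderDual.toDual (f (OrderDual.toDual u)))
      (fun u => OrderDual.toDual (h (OrderDual.toDual u))) where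
  le_iff u v := by simpa [and_left_comm] using hR.le_iff (OrderDual.toDual v) (OrderDual.toDual u)
  lt_of_le_root u v hu hv := hR.lt_of_root_le (u := OrderDual.toDual v) hv hu
  lt_of_root_le u v hu hv := hR.lt_of_le_root (u := OrderDual.toDual v) hv hu

open Classical in
theorem glue {S : Set T} {c r : T} (hc : c ∈ S) (hr : r ∉ S)
    (le_iff_of_mem_of_notMem : ∀ u ∈ S, ∀ v ∉ S, u ≤ v ↔ u ≤ c ∧ r ≤ v)
    (not_le_of_notMem_of_mem : ∀ u ∉ S, ∀ v ∈ S, ¬ u ≤ v)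
    {f₁ g₁ h₁ : S → α} (hR₁ : IsRootedRealizer_s18 (⟨c, hc⟩ : S) f₁ g₁ h₁)
    {f₀ g₀ h₀ : ↥Sᶜ → α} (hR₀ : IsRootedRealizer_s18 (⟨r, hr⟩ : ↥Sᶜ) f₀ g₀ h₀) :
    ∃ f g h : T → ℕ ×ₗ α, IsRootedRealizer_s18 r f g h := by
  have hcr : c ≤ r := by simpa using (le_iff_of_mem_of_notMem c hc r hr).2
  have f₁_iff := toLex_ite_le_toLex_ite_iff (m := 0) (n := 2) two_pos hR₁.lt_of_le_root
  have g₀_iff := toLex_ite_le_toLex_ite_iff (m := 0) (n := 2) two_pos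
    (P := fun t : ↥Sᶜ => ¬ ⟨r, hr⟩ ≤ t) fun _ _ hs ht => hR₀.lt_of_root_le hs (not_not.1 ht)
  refine ⟨fun u => if hu : u ∈ S then toLex (if (⟨u, hu⟩ : S) ≤ ⟨c, hc⟩ then 0 else 2, f₁ ⟨u, hu⟩)
      else toLex (1, f₀ ⟨u, hu⟩),
    fun u => if hu : u ∈ S then toLex (1, g₁ ⟨u, hu⟩)
      else toLex (if ¬ (⟨r, hr⟩ : ↥Sᶜ) ≤ ⟨u, hu⟩ then 0 else 2, g₀ ⟨u, hu⟩),
    fun u => if hu : u ∈ S then toLex (0, h₁ ⟨u, hu⟩) else toLex (1, h₀ ⟨u, hu⟩), ⟨?_, ?_, ?_⟩⟩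
  · intro u v
    by_cases hu : u ∈ S <;> by_cases hv : v ∈ S
    · simp only [dif_pos hu, dif_pos hv, f₁_iff, Prod.Lex.toLex_le_toLex, lt_irrefl, true_and,
        false_or]
      exact hR₁.le_iff ⟨u, hu⟩ ⟨v, hv⟩
    · rw [le_iff_of_mem_of_notMem u hu v hv]
      by_cases huc : u ≤ c <;> by_cases hrv : r ≤ v <;>
        simp [hu, hv, huc, hrv, Prod.Lex.toLex_le_toLex]
    · simp [hu, hv, not_le_of_notMem_of_mem u hu v hv, Prod.Lex.toLex_le_toLex]
    · simp only [dif_neg hu, dif_neg hv, g₀_iff, Prod.Lex.toLex_le_toLex, lt_irrefl, true_and,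
        false_or]
      exact hR₀.le_iff ⟨u, hu⟩ ⟨v, hv⟩
  · intro u v hur hvr
    have hvc : ¬ v ≤ c := fun hvc => hvr (hvc.trans hcr)
    by_cases hu : u ∈ S
    · have huc : u ≤ c := ((le_iff_of_mem_of_notMem u hu r hr).1 hur).1
      by_cases hv : v ∈ S <;> simp [hu, hv, huc, hvc, Prod.Lex.toLex_lt_toLex]
    · by_cases hv : v ∈ S
      · simp [hu, hv, hvc, Prod.Lex.toLex_lt_toLex]
      · simpa [hu, hv, Prod.Lex.toLex_lt_toLex] using
          hR₀.lt_of_le_root (u := ⟨u, hu⟩) (v := ⟨v, hv⟩) hur hvr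
  · intro u v hru hrv
    have hv : v ∉ S := fun hv => not_le_of_notMem_of_mem r hr v hv hrv
    by_cases hu : u ∈ S <;> simp [hu, hv, hru, hrv, Prod.Lex.toLex_lt_toLex]

end IsRootedRealizer_s18

lemma SimpleGraph.Connected.reachable_deleteEdges_or {V : Type*} {G : SimpleGraph V}
    (hG : G.Connected) (c r u : V) :
    (G.deleteEdges {s(c, r)}).Reachable c u ∨ (G.deleteEdges {s(c, r)}).Reachable r u := by
  induction (SimpleGraph.reachable_iff_reflTransGen c u).1 (hG c u) with
  | refl => exact .inl .rfl
  | @tail w u _ hwu ih =>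
    by_cases he : s(w, u) = s(c, r)
    · rcases Sym2.eq_iff.1 he with ⟨-, rfl⟩ | ⟨-, rfl⟩
      · exact .inr .rfl
      · exact .inl .rfl
    · have hadj : (G.deleteEdges {s(c, r)}).Adj w u := by simp [hwu, he]
      exact ih.imp (·.trans hadj.reachable) (·.trans hadj.reachable)

lemma SimpleGraph.IsBridge.compl_supp_connectedComponentMk {V : Type*} {G : SimpleGraph V}
    (hG : G.Connected) {c r : V} (hb : G.IsBridge s(c, r)) :
    ((G.deleteEdges {s(c, r)}).connectedComponentMk c).suppᶜ =
      ((G.deleteEdges {s(c, r)}).connectedComponentMk r).supp := by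
  ext u
  simp only [Set.mem_compl_iff, SimpleGraph.ConnectedComponent.mem_supp_iff,
    SimpleGraph.ConnectedComponent.eq]
  rw [SimpleGraph.isBridge_iff] at hb
  exact ⟨fun hc => ((hG.reachable_deleteEdges_or c r u).resolve_left fun h => hc h.symm).symm,
    fun hr hc => hb (hc.symm.trans hr)⟩

section CoverGraph

variable {T : Type*} [PartialOrder T]

lemma coverGraph_orderDual : coverGraph Tᵒᵈ = coverGraph T := by
  ext u v
  exact or_comm.trans (or_congr ofDual_covBy_ofDual_iff ofDual_covBy_ofDual_iff)

lemma coverGraph_subtype_eq_induce {S : Set T} (hS : S.OrdConnected) :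
    coverGraph S = (coverGraph T).induce S := by
  have hcov (u v : S) : u ⋖ v ↔ (u : T) ⋖ v :=
    (Set.OrdConnected.apply_covBy_apply_iff (OrderEmbedding.subtype (· ∈ S))
      (by simpa using hS)).symm
  ext u v
  simp [coverGraph, hcov]

lemma reachable_deleteEdges_or_of_le [Finite T] {c r u v : T} (hcr : c ⋖ r) (huv : u ≤ v) :
    ((coverGraph T).deleteEdges {s(c, r)}).Reachable u v ∨ u ≤ c ∧ r ≤ v := by
  classical
  have := Fintype.ofFinite T
  let := Fintype.toLocallyFiniteOrder (α := T)
  replace huv := le_iff_reflTransGen_covBy.1 huv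
  induction huv using Relation.ReflTransGen.head_induction_on with
  | refl => exact .inl .rfl
  | @head u w huw hwv ih =>
    by_cases he : s(u, w) = s(c, r)
    · rcases Sym2.eq_iff.1 he with ⟨rfl, rfl⟩ | ⟨rfl, rfl⟩
      · exact .inr ⟨le_rfl, le_iff_reflTransGen_covBy.2 hwv⟩
      · exact absurd huw.lt hcr.lt.not_gt
    · have hadj : ((coverGraph T).deleteEdges {s(c, r)}).Adj u w := by
        simp [coverGraph, huw, he]
      exact ih.imp hadj.reachable.trans fun h => ⟨huw.le.trans h.1, h.2⟩

def bridgeSide (e : Sym2 T) (u : T) : Set T :=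
  (((coverGraph T).deleteEdges {e}).connectedComponentMk u).supp

lemma mem_bridgeSide {e : Sym2 T} {u v : T} :
    v ∈ bridgeSide e u ↔ ((coverGraph T).deleteEdges {e}).Reachable u v := by
  simp [bridgeSide, SimpleGraph.ConnectedComponent.eq, SimpleGraph.reachable_comm]

lemma compl_bridgeSide (htree : (coverGraph T).IsTree) {c r : T} (hcr : (coverGraph T).Adj c r) :
    (bridgeSide s(c, r) c)ᶜ = bridgeSide s(c, r) r :=
  (SimpleGraph.isAcyclic_iff_forall_adj_isBridge.1 htree.isAcyclic hcr
    ).compl_supp_connectedComponentMk htree.connected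

lemma isTree_coverGraph_bridgeSide (htree : (coverGraph T).IsTree) (e : Sym2 T) (u : T)
    (hS : (bridgeSide e u).OrdConnected) : (coverGraph (bridgeSide e u)).IsTree := by
  rw [coverGraph_subtype_eq_induce hS]
  refine ⟨SimpleGraph.Connected.mono ?_ (SimpleGraph.ConnectedComponent.connected_toSimpleGraph _),
    htree.isAcyclic.induce _⟩
  exact fun _ _ h => SimpleGraph.deleteEdges_le {e} h

variable [Finite T] {c r : T}

lemma le_iff_of_mem_bridgeSide_of_notMem (hcr : c ⋖ r) {u v : T} (hu : u ∈ bridgeSide s(c, r) c)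
    (hv : v ∉ bridgeSide s(c, r) c) : u ≤ v ↔ u ≤ c ∧ r ≤ v := by
  refine ⟨fun huv => (reachable_deleteEdges_or_of_le hcr huv).resolve_left fun h => ?_,
    fun h => h.1.trans (hcr.le.trans h.2)⟩
  exact hv (mem_bridgeSide.2 ((mem_bridgeSide.1 hu).trans h))

lemma not_le_of_notMem_bridgeSide_of_mem (htree : (coverGraph T).IsTree) (hcr : c ⋖ r) {u v : T}
    (hu : u ∉ bridgeSide s(c, r) c) (hv : v ∈ bridgeSide s(c, r) c) : ¬ u ≤ v := by
  have hr : r ∉ bridgeSide s(c, r) c := by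
    rw [← Set.mem_compl_iff, compl_bridgeSide htree (Or.inl hcr)]
    exact mem_bridgeSide.2 .rfl
  have le_of_notMem {w : T} (hw : w ∉ bridgeSide s(c, r) c) (hwv : w ≤ v) : w ≤ c ∧ r ≤ v :=
    (reachable_deleteEdges_or_of_le hcr hwv).resolve_left fun h =>
      hw (mem_bridgeSide.2 ((mem_bridgeSide.1 hv).trans h.symm))
  exact fun huv => hcr.lt.not_ge (le_of_notMem hr (le_of_notMem hu huv).2).1

end CoverGraph

universe u

theorem exists_isRootedRealizer_of_covBy {T : Type u} [PartialOrder T] [Finite T]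
    (htree : (coverGraph T).IsTree) {c r : T} (hcr : c ⋖ r)
    (ih : ∀ (S : Type u) [PartialOrder S] [Finite S], Nat.card S < Nat.card T →
      (coverGraph S).IsTree → ∀ s : S, ∃ f g h : S → ℚ, IsRootedRealizer_s18 s f g h) :
    ∃ f g h : T → ℚ, IsRootedRealizer_s18 r f g h := by
  set S := bridgeSide s(c, r) c
  have hc : c ∈ S := mem_bridgeSide.2 .rfl
  have hSc : Sᶜ = bridgeSide s(c, r) r := compl_bridgeSide htree (Or.inl hcr)
  have hr : r ∉ S := by rw [← Set.mem_compl_iff, hSc]; exact mem_bridgeSide.2 .rfl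
  have not_le (u) (hu : u ∉ S) (v) (hv : v ∈ S) : ¬ u ≤ v :=
    not_le_of_notMem_bridgeSide_of_mem htree hcr hu hv
  have hS : S.OrdConnected := ⟨fun _ _ q hq w hw => by_contra fun hw' => not_le w hw' q hq hw.2⟩
  have hS' : Sᶜ.OrdConnected := ⟨fun p hp _ _ w hw hw' => not_le p hp w hw' hw.1⟩
  obtain ⟨f₁, g₁, h₁, hR₁⟩ := ih S (Finite.card_subtype_lt hr)
    (isTree_coverGraph_bridgeSide htree _ _ hS) ⟨c, hc⟩
  obtain ⟨f₀, g₀, h₀, hR₀⟩ := ih ↥Sᶜ (Finite.card_subtype_lt (not_not.2 hc))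
    (hSc ▸ isTree_coverGraph_bridgeSide htree _ _ (hSc ▸ hS')) ⟨r, hr⟩
  have : Countable (ℕ ×ₗ ℚ) := inferInstanceAs (Countable (ℕ × ℚ))
  obtain ⟨f, g, h, hR⟩ := IsRootedRealizer_s18.glue hc hr
    (fun u hu v hv => le_iff_of_mem_bridgeSide_of_notMem hcr hu hv) not_le hR₁ hR₀
  exact hR.exists_rat

theorem exists_isRootedRealizer {T : Type u} [PartialOrder T] [Finite T]
    (htree : (coverGraph T).IsTree) (r : T) : ∃ f g h : T → ℚ, IsRootedRealizer_s18 r f g h := by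
  induction hn : Nat.card T using Nat.strong_induction_on generalizing T with
  | _ n ih =>
  have ih' (S : Type u) [PartialOrder S] [Finite S] (hS : Nat.card S < Nat.card T)
      (htree : (coverGraph S).IsTree) (s : S) : ∃ f g h : S → ℚ, IsRootedRealizer_s18 s f g h :=
    ih _ (hn ▸ hS) htree s rfl
  rcases subsingleton_or_nontrivial T with hT | hT
  · exact ⟨_, _, _, .of_subsingleton r fun _ => 0⟩
  obtain ⟨c, hrc | hcr⟩ := htree.connected.preconnected.exists_adj_of_nontrivial r
  · have : Countable ℚᵒᵈ := inferInstanceAs (Countable ℚ)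
    obtain ⟨f, g, h, hR⟩ := exists_isRootedRealizer_of_covBy
      (coverGraph_orderDual (T := T) ▸ htree) hrc.toDual fun S _ _ hS => ih' S hS
    exact hR.ofDual.exists_rat
  · exact exists_isRootedRealizer_of_covBy htree hcr ih'

section Graft

variable {β : Type*} [PartialOrder β] {T : β → Type*} [∀ w, PartialOrder (T w)] (r : ∀ w, T w)

lemma graftLE_mk_mk_self {w : β} {s t : T w} : graftLE r ⟨w, s⟩ ⟨w, t⟩ ↔ s ≤ t := by
  simp [graftLE]

lemma graftLE_mk_mk_of_ne {u v : β} (huv : u ≠ v) {s : T u} {t : T v} :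
    graftLE r ⟨u, s⟩ ⟨v, t⟩ ↔ u < v ∧ s ≤ r u ∧ r v ≤ t := by
  simp [graftLE, huv]

lemma graftLE_antisymm (p q : Σ w, T w) (hpq : graftLE r p q) (hqp : graftLE r q p) : p = q := by
  obtain ⟨u, s⟩ := p
  obtain ⟨v, t⟩ := q
  by_cases huv : u = v
  · subst huv
    rw [graftLE_mk_mk_self] at hpq hqp
    rw [le_antisymm hpq hqp]
  · exact absurd ((graftLE_mk_mk_of_ne r huv).1 hpq).1
      ((graftLE_mk_mk_of_ne r (Ne.symm huv)).1 hqp).1.not_gt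

open Classical in
/-- The three keys order the blocks as
* `T x` (by `h`) `<` `a` `<` `b` `<` `T z` (by `f`),
* `T z ∖ ↑(r z)` `<` `T x` `<` `b` `<` `a` `<` `↑(r z)` (all by `g`),
* `↓(r x)` (by `f`) `<` `a` `<` `b` `<` `T z` (by `h`) `<` `T x ∖ ↓(r x)` (by `f`). -/
noncomputable def squareKeys (x a b : β) (f g h : ∀ w, T w → ℚ) :
    Fin 3 → (Σ w, T w) → ℕ ×ₗ ℚ :=
  ![fun p => toLex (if p.1 = x then 0 else if p.1 = a then 1 else if p.1 = b then 2 else 3,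
      if p.1 = x then h p.1 p.2 else f p.1 p.2),
    fun p => toLex (if p.1 = x then 1 else if p.1 = a then 3 else if p.1 = b then 2
      else if ¬ r p.1 ≤ p.2 then 0 else 4, g p.1 p.2),
    fun p => toLex (if p.1 = x then (if p.2 ≤ r p.1 then 0 else 4) else if p.1 = a then 1
      else if p.1 = b then 2 else 3, if p.1 = x then f p.1 p.2 else h p.1 p.2)]

theorem graftLE_iff_squareKeys {x a b z : β} (hnd : [x, a, b, z].Nodup)
    (hall : ∀ w : β, w = x ∨ w = a ∨ w = b ∨ w = z)
    (hlt : ∀ u v : β, u < v ↔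
      ((u = x ∧ (v = a ∨ v = b ∨ v = z)) ∨ ((u = a ∨ u = b) ∧ v = z)))
    (htriv : ∀ w, w ≠ x → w ≠ z → ∀ t t' : T w, t = t') {f g h : ∀ w, T w → ℚ}
    (hR : ∀ w, IsRootedRealizer_s18 (r w) (f w) (g w) (h w)) (p q : Σ w, T w) :
    graftLE r p q ↔ ∀ i, squareKeys r x a b f g h i p ≤ squareKeys r x a b f g h i q := by
  classical
  obtain ⟨⟨hxa, hxb, hxz⟩, ⟨hab, haz⟩, hbz⟩ :
      (x ≠ a ∧ x ≠ b ∧ x ≠ z) ∧ (a ≠ b ∧ a ≠ z) ∧ b ≠ z := by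
    simpa using hnd
  have hra (t : T a) : r a ≤ t ∧ t ≤ r a := by simp [htriv a hxa.symm haz t (r a)]
  have hrb (t : T b) : r b ≤ t ∧ t ≤ r b := by simp [htriv b hxb.symm hbz t (r b)]
  have f_iff := toLex_ite_le_toLex_ite_iff (m := 0) (n := 4) (by norm_num) (hR x).lt_of_le_root
  have g_iff := toLex_ite_le_toLex_ite_iff (m := 0) (n := 4) (by norm_num)
    (P := fun t : T z => ¬ r z ≤ t) fun _ _ hs ht => (hR z).lt_of_root_le hs (not_not.1 ht)
  obtain ⟨u, s⟩ := p
  obtain ⟨v, t⟩ := q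
  simp only [squareKeys, Fin.forall_fin_succ, Matrix.cons_val_zero, Matrix.cons_val_succ,
    IsEmpty.forall_iff, and_true]
  by_cases huv : u = v
  · subst huv
    rw [graftLE_mk_mk_self, (hR u).le_iff]
    rcases hall u with rfl | rfl | rfl | rfl
    · simp only [if_true, f_iff]
      simp only [Prod.Lex.toLex_le_toLex, lt_self_iff_false, true_and, false_or]
      tauto
    · simp [Prod.Lex.toLex_le_toLex, hxa.symm]
    · simp [Prod.Lex.toLex_le_toLex, hxb.symm, hab.symm]
    · simp only [hxz.symm, haz.symm, hbz.symm, if_false, g_iff]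
      simp [Prod.Lex.toLex_le_toLex]
  · rw [graftLE_mk_mk_of_ne r huv]
    rcases hall u with rfl | rfl | rfl | rfl <;> rcases hall v with rfl | rfl | rfl | rfl
    all_goals first
      | exact absurd rfl huv
      | simp [Prod.Lex.toLex_le_toLex, hlt, hra, hrb, hxa, hxb, hxz, hab, haz, hbz, hxa.symm,
          hxb.symm, hxz.symm, hab.symm, haz.symm, hbz.symm] <;> split_ifs <;> simp_all

end Graft

theorem graft_square_dim_le_three_general {β : Type*} [PartialOrder β]
    (x a b z : β) (hnd : [x, a, b, z].Nodup)
    (hall : ∀ w : β, w = x ∨ w = a ∨ w = b ∨ w = z)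
    (hlt : ∀ u v : β, u < v ↔
      ((u = x ∧ (v = a ∨ v = b ∨ v = z)) ∨ ((u = a ∨ u = b) ∧ v = z)))
    {T : β → Type*} [∀ w, PartialOrder (T w)] [∀ w, Fintype (T w)]
    (htree : ∀ w, (coverGraph (T w)).IsTree) (r : ∀ w, T w)
    (htriv : ∀ w, w ≠ x → w ≠ z → ∀ t t' : T w, t = t') :
    ∃ L : Fin 3 → (Σ w, T w) → (Σ w, T w) → Prop,
      (∀ i, IsLinearOrder (Σ w, T w) (L i) ∧ ∀ p q, graftLE r p q → L i p q) ∧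
      (∀ p q : Σ w, T w, graftLE r p q ↔ ∀ i, L i p q) := by
  choose f g h hR using fun w => exists_isRootedRealizer (htree w) (r w)
  exact exists_linearOrder_realizer_of_keys (graftLE r) (graftLE_antisymm r) _
    (graftLE_iff_squareKeys r hnd hall hlt htriv hR)

/-- grafting rooted tree posets on the minimum and maximum of the
square poset yields a poset of dimension at most `3` (the trees grafted at the
two middle vertices being trivial). -/
theorem graft_square_dim_le_three {β : Type*} [PartialOrder β] [Fintype β]
    (x a b z : β) (hnd : [x, a, b, z].Nodup)
    (hall : ∀ w : β, w = x ∨ w = a ∨ w = b ∨ w = z)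
    (hlt : ∀ u v : β, u < v ↔
      ((u = x ∧ (v = a ∨ v = b ∨ v = z)) ∨ ((u = a ∨ u = b) ∧ v = z)))
    {T : β → Type*} [∀ w, PartialOrder (T w)] [∀ w, Fintype (T w)]
    (htree : ∀ w, (coverGraph (T w)).IsTree) (r : ∀ w, T w)
    (htriv : ∀ w, w ≠ x → w ≠ z → ∀ t t' : T w, t = t') :
    ∃ L : Fin 3 → (Σ w, T w) → (Σ w, T w) → Prop,
      (∀ i, IsLinearOrder (Σ w, T w) (L i) ∧ ∀ p q, graftLE r p q → L i p q) ∧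
      (∀ p q : Σ w, T w, graftLE r p q ↔ ∀ i, L i p q) :=
  graft_square_dim_le_three_general x a b z hnd hall hlt htree r htriv
end
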